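/- arXiv:1504.00769 — 6 statements merged into one kernel-verified Lean document; each statement's English description precedes it below -/
import Mathlib

section
/- For every integer r ≥ 3, if (a,b) ⊆ (0,1) is an open interval disjoint from Π_∞^(r) with b − a = r!/r^r, then a = 0 and b = r!/r^r; that is, (0, r!/r^r) is the only gap of maximal length r!/r^r for r-graphs. -/
open Filter Topology

/-- An `r`-graph: a finite vertex set (identified with `Fin n`) together with a set of
edges, each of which is an `r`-element subset of the vertex set. -/
structure RGraph (r : ℕ) where
  n : ℕ
  edges : Finset (Finset (Fin n))
  card_eq : ∀ e ∈ edges, e.card = r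

/-- `F` is a subgraph of `G`: there is an injection of the vertices of `F` into the
vertices of `G` carrying every edge of `F` to an edge of `G`. -/
def RGraph.IsSubgraph {r : ℕ} (F G : RGraph r) : Prop :=
  ∃ f : Fin F.n → Fin G.n, Function.Injective f ∧ ∀ e ∈ F.edges, e.image f ∈ G.edges

/-- `G` is `𝓕`-free: no member of `𝓕` is a subgraph of `G`. -/
def RGraph.Free {r : ℕ} (𝓕 : Set (RGraph r)) (G : RGraph r) : Prop :=
  ∀ F ∈ 𝓕, ¬ F.IsSubgraph G

/-- The Turán function `ex(n, 𝓕)`: the maximum number of edges in an `𝓕`-free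
`r`-graph on `n` vertices. -/
noncomputable def exNum (r : ℕ) (𝓕 : Set (RGraph r)) (n : ℕ) : ℕ :=
  sSup {k : ℕ | ∃ G : RGraph r, G.n = n ∧ RGraph.Free 𝓕 G ∧ G.edges.card = k}

/-- `Π_∞^(r)`: the set of Turán densities `π(𝓕) = lim_{n→∞} ex(n,𝓕)/C(n,r)` over all
(possibly infinite, possibly empty) families `𝓕` of `r`-graphs. -/
def turanDensities (r : ℕ) : Set ℝ :=
  {x : ℝ | ∃ 𝓕 : Set (RGraph r),
    Tendsto (fun n : ℕ => (exNum r 𝓕 n : ℝ) / (n.choose r : ℝ)) atTop (𝓝 x)}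

/-!
For a pattern `E` of `r`-sets on a finite set, let `λ(E)` be the maximum of
`∑_{e ∈ E} ∏_{v ∈ e} x_v` over the standard simplex. Forbidding every `r`-graph that lies in no
blow-up of `E` leaves exactly the subgraphs of blow-ups as free graphs; these have at most
`λ(E) n^r` edges, and rounding a maximiser gives blow-ups with `(λ(E) - o(1)) n^r` edges, so
`r! λ(E)` is a Turán density.

At a maximiser `x`, an edge `e` contributes `∏_{v ∈ e} x_v ≤ r^{-r}` (AM–GM), with equality only
if all the weight of `x` sits on `e`, where every other edge vanishes. So `λ(E) < a + r^{-r}`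
whenever `0 < a` and `λ(E ∖ e) ≤ a`. Given `0 < a < 1`, a minimal subpattern `E` of a large
complete pattern with `r! λ(E) > a` therefore has `r! λ(E) < a + r!/r^r`.
-/

open Finset

namespace RGraph

variable {r : ℕ}

theorem IsSubgraph.refl (G : RGraph r) : G.IsSubgraph G :=
  ⟨id, Function.injective_id, fun e he => by simpa using he⟩

theorem IsSubgraph.trans {F G H : RGraph r} (hFG : F.IsSubgraph G) (hGH : G.IsSubgraph H) :
    F.IsSubgraph H := by
  obtain ⟨f, hf, hfE⟩ := hFG
  obtain ⟨g, hg, hgE⟩ := hGH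
  exact ⟨g ∘ f, hg.comp hf, fun e he => by rw [← image_image]; exact hgE _ (hfE e he)⟩

theorem card_edges_le_two_pow (G : RGraph r) : #G.edges ≤ 2 ^ G.n := by
  simpa using G.edges.card_le_univ

end RGraph

section ExNum

variable {r : ℕ} {𝓕 : Set (RGraph r)}

theorem le_exNum {G : RGraph r} (hG : G.Free 𝓕) : #G.edges ≤ exNum r 𝓕 G.n :=
  le_csSup ⟨2 ^ G.n, by rintro _ ⟨H, hH, -, rfl⟩; exact hH ▸ H.card_edges_le_two_pow⟩
    ⟨G, rfl, hG, rfl⟩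

theorem exNum_le_of_forall_le {n : ℕ} {B : ℝ} (hB : 0 ≤ B)
    (h : ∀ G : RGraph r, G.n = n → G.Free 𝓕 → (#G.edges : ℝ) ≤ B) :
    (exNum r 𝓕 n : ℝ) ≤ B := by
  have : exNum r 𝓕 n ≤ ⌊B⌋₊ :=
    csSup_le' fun _ ⟨G, hGn, hG, hk⟩ => hk ▸ Nat.le_floor (h G hGn hG)
  exact (Nat.cast_le.mpr this).trans (Nat.floor_le hB)

end ExNum

theorem prod_le_sum_div_card_pow {α : Type*} (s : Finset α) (z : α → ℝ)
    (hz : ∀ i ∈ s, 0 ≤ z i) : ∏ i ∈ s, z i ≤ ((∑ i ∈ s, z i) / #s) ^ #s := by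
  rcases s.eq_empty_or_nonempty with rfl | hs
  · simp
  have hcard : (0 : ℝ) < #s := by exact_mod_cast hs.card_pos
  have hgm := Real.geom_mean_le_arith_mean_weighted s (fun _ => (#s : ℝ)⁻¹) z
    (fun _ _ => by positivity) (by simp [hcard.ne']) hz
  rw [← mul_sum, inv_mul_eq_div, Real.finsetProd_rpow s z hz] at hgm
  calc ∏ i ∈ s, z i = ((∏ i ∈ s, z i) ^ (#s : ℝ)⁻¹) ^ #s := by
        rw [← Real.rpow_natCast, ← Real.rpow_mul (prod_nonneg hz), inv_mul_cancel₀ hcard.ne',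
          Real.rpow_one]
    _ ≤ _ := pow_le_pow_left₀ (Real.rpow_nonneg (prod_nonneg hz) _) hgm _

section Lagrangian

variable {ι : Type*}

def edgePoly (E : Finset (Finset ι)) (x : ι → ℝ) : ℝ := ∑ e ∈ E, ∏ v ∈ e, x v

theorem continuous_edgePoly (E : Finset (Finset ι)) : Continuous (edgePoly E) := by
  unfold edgePoly
  fun_prop

theorem edgePoly_smul {r : ℕ} {E : Finset (Finset ι)} (hE : ∀ e ∈ E, #e = r) (c : ℝ)
    (x : ι → ℝ) : edgePoly E (c • x) = c ^ r * edgePoly E x := by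
  simp only [edgePoly, mul_sum, Pi.smul_apply, smul_eq_mul, prod_mul_distrib, prod_const]
  exact sum_congr rfl fun e he => by rw [hE e he]

variable [Fintype ι] (E : Finset (Finset ι))

noncomputable def lagrangian : ℝ := sSup (edgePoly E '' stdSimplex ℝ ι)

theorem isCompact_image_edgePoly : IsCompact (edgePoly E '' stdSimplex ℝ ι) :=
  (isCompact_stdSimplex ℝ ι).image (continuous_edgePoly E)

theorem edgePoly_le_lagrangian {x : ι → ℝ} (hx : x ∈ stdSimplex ℝ ι) :
    edgePoly E x ≤ lagrangian E :=
  le_csSup (isCompact_image_edgePoly E).bddAbove ⟨x, hx, rfl⟩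

theorem exists_edgePoly_eq_lagrangian [Nonempty ι] :
    ∃ x ∈ stdSimplex ℝ ι, edgePoly E x = lagrangian E := by
  classical
  exact (isCompact_image_edgePoly E).sSup_mem
    ⟨_, _, single_mem_stdSimplex ℝ (Classical.arbitrary ι), rfl⟩

theorem lagrangian_nonneg [Nonempty ι] : 0 ≤ lagrangian E := by
  obtain ⟨x, hx, hxE⟩ := exists_edgePoly_eq_lagrangian E
  exact hxE ▸ sum_nonneg fun e _ => prod_nonneg fun v _ => hx.1 v

theorem lagrangian_empty [Nonempty ι] : lagrangian (∅ : Finset (Finset ι)) = 0 := by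
  obtain ⟨x, -, hx⟩ := exists_edgePoly_eq_lagrangian (∅ : Finset (Finset ι))
  simpa [edgePoly] using hx.symm

variable {E} {r : ℕ}

theorem edgePoly_le_lagrangian_mul_sum_pow (hE : ∀ e ∈ E, #e = r) {x : ι → ℝ}
    (hx : ∀ v, 0 ≤ x v) (hs : 0 < ∑ v, x v) :
    edgePoly E x ≤ lagrangian E * (∑ v, x v) ^ r := by
  set s := ∑ v, x v
  have hxs : s⁻¹ • x ∈ stdSimplex ℝ ι :=
    ⟨fun v => smul_nonneg (inv_nonneg.mpr hs.le) (hx v), by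
      simp only [Pi.smul_apply, smul_eq_mul, ← mul_sum, inv_mul_cancel₀ hs.ne', s]⟩
  calc edgePoly E x = s ^ r * edgePoly E (s⁻¹ • x) := by
        rw [← edgePoly_smul hE, smul_smul, mul_inv_cancel₀ hs.ne', one_smul]
    _ ≤ s ^ r * lagrangian E := by gcongr; exact edgePoly_le_lagrangian E hxs
    _ = lagrangian E * s ^ r := mul_comm _ _

theorem choose_div_pow_le_lagrangian_powersetCard [Nonempty ι] (r : ℕ) :
    ((Fintype.card ι).choose r : ℝ) / (Fintype.card ι : ℝ) ^ r
      ≤ lagrangian (powersetCard r (univ : Finset ι)) := by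
  have hcard : (0 : ℝ) < Fintype.card ι := by exact_mod_cast Fintype.card_pos
  have hunif : (fun _ => (Fintype.card ι : ℝ)⁻¹) ∈ stdSimplex ℝ ι :=
    ⟨fun _ => by positivity, by simp [hcard.ne']⟩
  refine le_of_eq_of_le ?_ (edgePoly_le_lagrangian _ hunif)
  rw [edgePoly, sum_congr rfl fun e he => by rw [prod_const, (mem_powersetCard.mp he).2],
    sum_const, card_powersetCard, card_univ, nsmul_eq_mul, inv_pow, div_eq_mul_inv]

theorem lagrangian_lt_of_lagrangian_erase_le [Nonempty ι] [DecidableEq ι] (hr : 0 < r)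
    (hE : ∀ e ∈ E, #e = r) {e : Finset ι} (he : e ∈ E) {a : ℝ} (ha : 0 < a)
    (h : lagrangian (E.erase e) ≤ a) : lagrangian E < a + (r : ℝ)⁻¹ ^ r := by
  obtain ⟨x, hx, hxE⟩ := exists_edgePoly_eq_lagrangian E
  have hsplit : edgePoly E x = edgePoly (E.erase e) x + ∏ v ∈ e, x v :=
    (sum_erase_add E _ he).symm
  have hsum : ∑ v ∈ e, x v ≤ 1 :=
    hx.2 ▸ sum_le_sum_of_subset_of_nonneg (subset_univ e) fun v _ _ => hx.1 v
  have hamgm : ∏ v ∈ e, x v ≤ ((∑ v ∈ e, x v) / r) ^ r :=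
    hE e he ▸ prod_le_sum_div_card_pow e x fun v _ => hx.1 v
  rw [← hxE, hsplit]
  rcases hsum.lt_or_eq with hlt | heq
  · have hprod : ∏ v ∈ e, x v < (r : ℝ)⁻¹ ^ r := by
      refine hamgm.trans_lt (pow_lt_pow_left₀ ?_ ?_ hr.ne')
      · rw [← one_div]; gcongr
      · exact div_nonneg (sum_nonneg fun v _ => hx.1 v) r.cast_nonneg
    linarith [edgePoly_le_lagrangian (E.erase e) hx]
  -- All the weight of `x` sits on `e`, and every other edge leaves `e`.
  have hzero : ∀ v ∉ e, x v = 0 := by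
    have hout : ∑ v ∈ univ \ e, x v = 0 := by
      linarith [sum_sdiff (f := x) (subset_univ e), hx.2]
    exact fun v hv =>
      (sum_eq_zero_iff_of_nonneg fun w _ => hx.1 w).mp hout v (mem_sdiff.mpr ⟨mem_univ v, hv⟩)
  have hrest : edgePoly (E.erase e) x = 0 := by
    refine sum_eq_zero fun e' he' => ?_
    obtain ⟨hne, he'E⟩ := mem_erase.mp he'
    obtain ⟨v, hv, hve⟩ := not_subset.mp fun hsub =>
      hne (eq_of_subset_of_card_le hsub (by rw [hE e he, hE e' he'E]))
    exact prod_eq_zero hv (hzero v hve)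
  have hprod : ∏ v ∈ e, x v ≤ (r : ℝ)⁻¹ ^ r := by rwa [heq, one_div] at hamgm
  linarith

theorem exists_subset_lagrangian_mem_Ioo [Nonempty ι] [DecidableEq ι] (hr : 0 < r)
    (hE : ∀ e ∈ E, #e = r) {a : ℝ} (ha : 0 < a) (haE : a < lagrangian E) :
    ∃ E' ⊆ E, lagrangian E' ∈ Set.Ioo a (a + (r : ℝ)⁻¹ ^ r) := by
  obtain ⟨E', hE'mem, hmin⟩ := (E.powerset.filter fun E' => a < lagrangian E').exists_min_image
    card ⟨E, mem_filter.mpr ⟨mem_powerset_self E, haE⟩⟩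
  obtain ⟨hE'E, haE'⟩ : E' ⊆ E ∧ a < lagrangian E' := by simpa using hE'mem
  obtain ⟨e, he⟩ : E'.Nonempty := nonempty_iff_ne_empty.mpr fun h => by
    rw [h, lagrangian_empty] at haE'
    exact ha.not_gt haE'
  have herase : lagrangian (E'.erase e) ≤ a := by
    by_contra! h
    exact (card_erase_lt_of_mem he).not_ge
      (hmin _ (mem_filter.mpr ⟨mem_powerset.mpr ((erase_subset e E').trans hE'E), h⟩))
  exact ⟨E', hE'E, haE',
    lagrangian_lt_of_lagrangian_erase_le hr (fun e' he' => hE e' (hE'E he')) he ha herase⟩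

end Lagrangian

theorem card_filter_powerset_image_eq_prod {α β : Type*} [DecidableEq α] [DecidableEq β]
    (cl : α → β) (S : Finset α) (e : Finset β) :
    #{A ∈ S.powerset | #A = #e ∧ A.image cl = e} = ∏ v ∈ e, #{i ∈ S | cl i = v} := by
  rw [← card_pi]
  symm
  refine card_bij (fun p _ => e.attach.image fun v => p v.1 v.2) ?_ ?_ ?_
  · intro p hp
    have hpS : ∀ v hv, p v hv ∈ S ∧ cl (p v hv) = v := fun v hv =>
      mem_filter.mp (mem_pi.mp hp v hv)
    have hcl : (cl ∘ fun v : e => p v.1 v.2) = Subtype.val := funext fun v => (hpS v.1 v.2).2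
    have hinj : Function.Injective fun v : e => p v.1 v.2 :=
      Function.Injective.of_comp (f := cl) (by rw [hcl]; exact Subtype.val_injective)
    refine mem_filter.mpr ⟨mem_powerset.mpr ?_, ?_, ?_⟩
    · intro i hi
      obtain ⟨v, -, rfl⟩ := mem_image.mp hi
      exact (hpS v.1 v.2).1
    · rw [card_image_of_injective _ hinj, card_attach]
    · rw [image_image, hcl, attach_image_val]
  · intro p hp q hq hpq
    funext v hv
    obtain ⟨w, -, hw⟩ := mem_image.mp
      (hpq ▸ mem_image_of_mem (fun v : e => p v.1 v.2) (mem_attach e ⟨v, hv⟩))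
    have hclp := (mem_filter.mp (mem_pi.mp hp v hv)).2
    have hclq := (mem_filter.mp (mem_pi.mp hq w.1 w.2)).2
    obtain rfl : w.1 = v := by rw [← hclq, hw, hclp]
    exact hw.symm
  · intro A hA
    obtain ⟨hAS, hcard, himage⟩ := by simpa only [mem_filter, mem_powerset] using hA
    have hinj : Set.InjOn cl A := card_image_iff.mp (by rw [himage, hcard])
    have hex : ∀ v ∈ e, ∃ i ∈ A, cl i = v := fun v hv => mem_image.mp (himage ▸ hv)
    choose p hpA hpcl using hex
    refine ⟨p, mem_pi.mpr fun v hv => mem_filter.mpr ⟨hAS (hpA v hv), hpcl v hv⟩, ?_⟩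
    refine Subset.antisymm (fun i hi => ?_) (fun i hi => ?_)
    · obtain ⟨v, -, rfl⟩ := mem_image.mp hi
      exact hpA v.1 v.2
    · have hv : cl i ∈ e := himage ▸ mem_image_of_mem cl hi
      refine mem_image.mpr ⟨⟨cl i, hv⟩, mem_attach _ _, ?_⟩
      exact hinj (hpA _ hv) hi (hpcl _ hv)

section BlowUp

variable {ι : Type*} [DecidableEq ι]

def blowUp (r : ℕ) (E : Finset (Finset ι)) {N : ℕ} (cl : Fin N → ι) : RGraph r where
  n := N
  edges := {A | #A = r ∧ A.image cl ∈ E}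
  card_eq _ hA := (mem_filter.mp hA).2.1

def nonBlowUpSubgraphs (r : ℕ) (E : Finset (Finset ι)) : Set (RGraph r) :=
  {F | ∀ (N : ℕ) (cl : Fin N → ι), ¬ F.IsSubgraph (blowUp r E cl)}

variable {r : ℕ} {E : Finset (Finset ι)}

theorem free_nonBlowUpSubgraphs_iff {G : RGraph r} :
    G.Free (nonBlowUpSubgraphs r E) ↔
      ∃ (N : ℕ) (cl : Fin N → ι), G.IsSubgraph (blowUp r E cl) := by
  refine ⟨fun hG => ?_, ?_⟩
  · by_contra! h
    exact hG G h (.refl G)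
  · rintro ⟨N, cl, hG⟩ F hF hFG
    exact hF N cl (hFG.trans hG)

theorem blowUp_free {N : ℕ} (cl : Fin N → ι) :
    (blowUp r E cl).Free (nonBlowUpSubgraphs r E) :=
  free_nonBlowUpSubgraphs_iff.mpr ⟨N, cl, .refl _⟩

theorem card_blowUp_edges_filter_subset (hE : ∀ e ∈ E, #e = r) {N : ℕ} (cl : Fin N → ι)
    (S : Finset (Fin N)) :
    #{A ∈ (blowUp r E cl).edges | A ⊆ S} = ∑ e ∈ E, ∏ v ∈ e, #{i ∈ S | cl i = v} := by
  rw [card_eq_sum_card_fiberwise (f := fun A => A.image cl) (t := E)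
    fun A hA => (mem_filter.mp (mem_filter.mp hA).1).2.2]
  refine sum_congr rfl fun e he => ?_
  rw [← card_filter_powerset_image_eq_prod, hE e he]
  congr 1
  ext A
  simp only [blowUp, mem_filter, mem_univ, true_and, mem_powerset]
  constructor
  · rintro ⟨⟨⟨hA, -⟩, hAS⟩, rfl⟩
    exact ⟨hAS, hA, rfl⟩
  · rintro ⟨hAS, hA, rfl⟩
    exact ⟨⟨⟨hA, he⟩, hAS⟩, rfl⟩

theorem exists_le_card_fiber [Fintype ι] [Nonempty ι] (m : ι → ℕ) {n : ℕ}
    (hm : ∑ v, m v ≤ n) :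
    ∃ cl : Fin n → ι, ∀ v, m v ≤ #{i | cl i = v} := by
  obtain ⟨φ⟩ := Function.Embedding.nonempty_of_card_le (α := Σ v, Fin (m v)) (β := Fin n)
    (by simpa using hm)
  refine ⟨Function.extend φ Sigma.fst fun _ => Classical.arbitrary ι, fun v => ?_⟩
  have hinj : Function.Injective fun j : Fin (m v) => φ ⟨v, j⟩ :=
    φ.injective.comp sigma_mk_injective
  calc m v = #(univ.image fun j : Fin (m v) => φ ⟨v, j⟩) := by
        rw [card_image_of_injective _ hinj, card_univ, Fintype.card_fin]
    _ ≤ _ := card_le_card fun i hi => by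
        obtain ⟨j, -, rfl⟩ := mem_image.mp hi
        exact mem_filter.mpr ⟨mem_univ _, φ.injective.extend_apply _ _ _⟩

end BlowUp

section Density

variable {ι : Type*} [Fintype ι] [DecidableEq ι] [Nonempty ι] {r : ℕ} {E : Finset (Finset ι)}

theorem exNum_le_lagrangian_mul_pow (hE : ∀ e ∈ E, #e = r) {n : ℕ} (hn : 0 < n) :
    (exNum r (nonBlowUpSubgraphs r E) n : ℝ) ≤ lagrangian E * (n : ℝ) ^ r := by
  refine exNum_le_of_forall_le (mul_nonneg (lagrangian_nonneg E) (by positivity))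
    fun G hGn hG => ?_
  obtain ⟨N, cl, f, hf, hfE⟩ := free_nonBlowUpSubgraphs_iff.mp hG
  set S : Finset (Fin N) := univ.image f
  set s : ι → ℝ := fun v => #{i ∈ S | cl i = v}
  have hs : ∑ v, s v = n := by
    have hS : #S = n := (card_image_of_injective _ hf).trans (by simp [hGn])
    have := card_eq_sum_card_fiberwise (s := S) (t := univ) (f := cl) fun _ _ => mem_univ _
    rw [hS] at this
    simp only [s]
    exact_mod_cast this.symm
  calc (#G.edges : ℝ) ≤ #{A ∈ (blowUp r E cl).edges | A ⊆ S} := by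
        refine Nat.cast_le.mpr (card_le_card_of_injOn (image f) (fun A hA => ?_) ?_)
        · exact mem_filter.mpr ⟨hfE A hA, image_subset_image (subset_univ A)⟩
        · exact fun A _ A' _ h => image_injective hf h
    _ = edgePoly E s := by
        simp only [edgePoly, s]
        exact_mod_cast card_blowUp_edges_filter_subset hE cl S
    _ ≤ lagrangian E * (∑ v, s v) ^ r :=
        edgePoly_le_lagrangian_mul_sum_pow hE (fun v => by positivity) (by rw [hs]; positivity)
    _ = lagrangian E * (n : ℝ) ^ r := by rw [hs]

theorem edgePoly_natFloor_le_exNum (hE : ∀ e ∈ E, #e = r) {x : ι → ℝ}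
    (hx : x ∈ stdSimplex ℝ ι) (n : ℕ) :
    edgePoly E (fun v => (⌊x v * n⌋₊ : ℝ)) ≤ exNum r (nonBlowUpSubgraphs r E) n := by
  have hm : ∑ v, ⌊x v * n⌋₊ ≤ n := by
    have : ∑ v, (⌊x v * n⌋₊ : ℝ) ≤ n :=
      calc ∑ v, (⌊x v * n⌋₊ : ℝ) ≤ ∑ v, x v * n :=
            sum_le_sum fun v _ => Nat.floor_le (mul_nonneg (hx.1 v) n.cast_nonneg)
        _ = n := by rw [← sum_mul, hx.2, one_mul]
    exact_mod_cast this
  obtain ⟨cl, hcl⟩ := exists_le_card_fiber _ hm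
  calc edgePoly E (fun v => (⌊x v * n⌋₊ : ℝ))
      ≤ ∑ e ∈ E, ∏ v ∈ e, (#{i | cl i = v} : ℝ) :=
        sum_le_sum fun e _ => prod_le_prod (fun _ _ => by positivity)
          fun v _ => by exact_mod_cast hcl v
    _ = #{A ∈ (blowUp r E cl).edges | A ⊆ univ} := by
        exact_mod_cast (card_blowUp_edges_filter_subset hE cl univ).symm
    _ ≤ #(blowUp r E cl).edges := by exact_mod_cast card_filter_le _ _
    _ ≤ exNum r (nonBlowUpSubgraphs r E) n := by exact_mod_cast le_exNum (blowUp_free cl)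

theorem tendsto_exNum_div_pow (hE : ∀ e ∈ E, #e = r) :
    Tendsto (fun n : ℕ => (exNum r (nonBlowUpSubgraphs r E) n : ℝ) / (n : ℝ) ^ r) atTop
      (𝓝 (lagrangian E)) := by
  obtain ⟨x, hx, hxE⟩ := exists_edgePoly_eq_lagrangian E
  have hfloor : Tendsto (fun n : ℕ => edgePoly E fun v => (⌊x v * n⌋₊ : ℝ) / n) atTop
      (𝓝 (lagrangian E)) := by
    rw [← hxE]
    refine ((continuous_edgePoly E).tendsto x).comp (tendsto_pi_nhds.mpr fun v => ?_)
    exact (tendsto_nat_floor_mul_div_atTop (hx.1 v)).comp tendsto_natCast_atTop_atTop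
  refine tendsto_of_tendsto_of_tendsto_of_le_of_le' hfloor tendsto_const_nhds ?_ ?_
  · filter_upwards [eventually_gt_atTop 0] with n hn
    have hn' : (0 : ℝ) < n := by exact_mod_cast hn
    have hscale : (fun v => (⌊x v * n⌋₊ : ℝ) / n) = (n : ℝ)⁻¹ • fun v => (⌊x v * n⌋₊ : ℝ) := by
      ext v
      simp [div_eq_inv_mul]
    rw [le_div_iff₀ (by positivity), hscale, edgePoly_smul hE, inv_pow, mul_comm,
      mul_inv_cancel_left₀ (by positivity)]
    exact edgePoly_natFloor_le_exNum hE hx n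
  · filter_upwards [eventually_gt_atTop 0] with n hn
    rw [div_le_iff₀ (by positivity)]
    exact exNum_le_lagrangian_mul_pow hE hn

theorem factorial_mul_lagrangian_mem_turanDensities (hE : ∀ e ∈ E, #e = r) :
    (r.factorial : ℝ) * lagrangian E ∈ turanDensities r := by
  refine ⟨nonBlowUpSubgraphs r E, ?_⟩
  refine ((Asymptotics.IsEquivalent.refl).div (isEquivalent_choose r)).tendsto_nhds_iff.mpr ?_
  refine ((tendsto_exNum_div_pow hE).const_mul (r.factorial : ℝ)).congr fun n => ?_
  simp only [Pi.div_apply]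
  rw [div_div_eq_mul_div, mul_div_assoc', mul_comm]

end Density

theorem tendsto_choose_div_pow (r : ℕ) :
    Tendsto (fun n : ℕ => (n.choose r : ℝ) / (n : ℝ) ^ r) atTop (𝓝 (r.factorial : ℝ)⁻¹) := by
  refine ((isEquivalent_choose r).div .refl).tendsto_nhds_iff.mpr
    (tendsto_const_nhds.congr' ?_)
  filter_upwards [eventually_gt_atTop 0] with n hn
  have : (n : ℝ) ^ r ≠ 0 := by positivity
  simp only [Pi.div_apply]
  field_simp

theorem exists_lt_lagrangian_powersetCard (r : ℕ) {a : ℝ} (ha : a < (r.factorial : ℝ)⁻¹) :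
    ∃ T > 0, a < lagrangian (powersetCard r (univ : Finset (Fin T))) := by
  obtain ⟨T, hTa, hT⟩ :=
    (((tendsto_choose_div_pow r).eventually (lt_mem_nhds ha)).and (eventually_gt_atTop 0)).exists
  have : Nonempty (Fin T) := ⟨⟨0, hT⟩⟩
  refine ⟨T, hT, hTa.trans_le ?_⟩
  simpa using choose_div_pow_le_lagrangian_powersetCard (ι := Fin T) r

theorem exists_mem_turanDensities_mem_Ioo {r : ℕ} (hr : 0 < r) {a : ℝ} (ha : 0 < a)
    (ha1 : a < 1) : ∃ x ∈ turanDensities r, x ∈ Set.Ioo a (a + r.factorial / (r : ℝ) ^ r) := by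
  have hfac : (0 : ℝ) < r.factorial := by exact_mod_cast r.factorial_pos
  obtain ⟨T, hT, hK⟩ := exists_lt_lagrangian_powersetCard r (a := a / r.factorial)
    (by rwa [← one_div, div_lt_div_iff_of_pos_right hfac])
  have : Nonempty (Fin T) := ⟨⟨0, hT⟩⟩
  obtain ⟨E, hEK, hEa, hEb⟩ := exists_subset_lagrangian_mem_Ioo hr
    (fun e he => (mem_powersetCard.mp he).2) (by positivity) hK
  refine ⟨_, factorial_mul_lagrangian_mem_turanDensities
    fun e he => (mem_powersetCard.mp (hEK he)).2, ?_, ?_⟩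
  · rwa [div_lt_iff₀' hfac] at hEa
  · calc (r.factorial : ℝ) * lagrangian E
        < r.factorial * (a / r.factorial + (r : ℝ)⁻¹ ^ r) := by gcongr
      _ = a + r.factorial / (r : ℝ) ^ r := by
        rw [mul_add, mul_div_cancel₀ a hfac.ne', inv_pow, div_eq_mul_inv]

/-- For every `r ≥ 3`, if `(a,b) ⊆ (0,1)` is an open interval disjoint from `Π_∞^(r)`
of length exactly `r!/r^r`, then `a = 0` and `b = r!/r^r`: the interval `(0, r!/r^r)`
is the only gap of maximal length. -/
theorem stmt1 (r : ℕ) (hr : 3 ≤ r) (a b : ℝ)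
    (hsub : Set.Ioo a b ⊆ Set.Ioo (0 : ℝ) 1)
    (hdisj : Set.Ioo a b ∩ turanDensities r = ∅)
    (hlen : b - a = (r.factorial : ℝ) / (r : ℝ) ^ r) :
    a = 0 ∧ b = (r.factorial : ℝ) / (r : ℝ) ^ r := by
  have hc : (0 : ℝ) < r.factorial / (r : ℝ) ^ r := by
    have : (0 : ℝ) < r.factorial := by exact_mod_cast r.factorial_pos
    positivity
  obtain ⟨ha0, hb1⟩ := (Set.Ioo_subset_Ioo_iff (by linarith)).mp hsub
  have ha : a = 0 := by
    by_contra ha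
    obtain ⟨x, hx, hxab⟩ :=
      exists_mem_turanDensities_mem_Ioo (by omega : 0 < r) (ha0.lt_of_ne' ha) (by linarith)
    rw [← hlen, add_sub_cancel] at hxab
    exact Set.eq_empty_iff_forall_notMem.mp hdisj x ⟨hxab, hx⟩
  exact ⟨ha, by linarith⟩
end

section
/- Let r, s ≥ 2 be integers and let A ⊆ 𝒫_{r,s} be down-closed with respect to the dominance order. Then the maximum of λ_A over the standard simplex 𝕊_s is attained at the uniform point, i.e., Λ_A = λ_A(1/s, …, 1/s). -/
/-- `𝒫_{r,s}`: non-increasing `s`-tuples of non-negative integers summing to `r`. -/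
def Pset (r s : ℕ) : Set (Fin s → ℕ) :=
  {x | (∀ i j : Fin s, i ≤ j → x j ≤ x i) ∧ ∑ i, x i = r}

/-- The dominance order: `x ⪰ y` iff every initial segment of `x` has sum at least
that of the corresponding initial segment of `y`. -/
def Dominates {s : ℕ} (x y : Fin s → ℕ) : Prop :=
  ∀ k : ℕ, ∑ i ∈ Finset.univ.filter (fun i : Fin s => (i : ℕ) < k), y i ≤
    ∑ i ∈ Finset.univ.filter (fun i : Fin s => (i : ℕ) < k), x i

/-- `A ⊆ 𝒫_{r,s}` is down-closed: `y ∈ A` whenever `x ∈ A`, `y ∈ 𝒫_{r,s}` and `x ⪰ y`. -/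
def DownClosed (r s : ℕ) (A : Set (Fin s → ℕ)) : Prop :=
  ∀ x ∈ A, ∀ y ∈ Pset r s, Dominates x y → y ∈ A

open Classical in
/-- `λ_A(x) = r! · Σ Π_i x_i^{d_i}/d_i!`, summed over all `s`-tuples `d` of non-negative
integers summing to `r` whose non-increasing rearrangement lies in `A` (equivalently,
for `A ⊆ 𝒫_{r,s}`, some rearrangement of `d` lies in `A`). -/
noncomputable def lamA (r s : ℕ) (A : Set (Fin s → ℕ)) (x : Fin s → ℝ) : ℝ :=
  ∑ d : Fin s → Fin (r + 1),
    if (∑ i, (d i : ℕ)) = r ∧ (∃ σ : Equiv.Perm (Fin s), (fun i => (d (σ i) : ℕ)) ∈ A) then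
      (r.factorial : ℝ) * ∏ i, (x i) ^ (d i : ℕ) / ((d i : ℕ).factorial : ℝ)
    else 0

/-- `Λ_A`: the maximum of `λ_A` over the standard simplex `𝕊_s`. -/
noncomputable def LamA (r s : ℕ) (A : Set (Fin s → ℕ)) : ℝ :=
  sSup (lamA r s A '' stdSimplex ℝ (Fin s))

/-!
Since `λ_A` is continuous on the compact simplex, among its maximizers there is one of least
Euclidean norm. Replacing two unequal coordinates `x i`, `x j` by their mean lowers the norm, so
that maximizer is the uniform point as soon as this averaging never decreases `λ_A`.

To see that it does not, group the exponent tuples `d` by their entries off `{i, j}`. In a group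
`d i + d j = m` is fixed, and moving `(d i, d j)` towards `(m/2, m/2)` gives a tuple whose sorted
rearrangement is dominated by that of `d`; by down-closedness the admissible values of `d i` form
a window `[l, m - l]`. The contribution of the group is then proportional to
`∑_{l ≤ k ≤ m - l} C(m, k) p^k (1 - p)^(m - k)` with `p = x i / (x i + x j)`. Its derivative
in `p` is `m (b(p) - b(1 - p))` for the Bernstein polynomial `b = b_{m-1, l-1}`, which is
nonnegative for `p ≤ 1/2` and nonpositive after, so `p = 1/2` is optimal.
-/

open Finset Function
open scoped Nat

@[to_additive]
theorem Fintype.prod_mul_mul_eq_of_eq_off_pair {ι M : Type*} [Fintype ι] [DecidableEq ι]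
    [CommMonoid M] {i j : ι} (hij : i ≠ j) {f g : ι → M}
    (hfg : ∀ l, l ≠ i → l ≠ j → f l = g l) :
    (∏ l, f l) * g i * g j = (∏ l, g l) * f i * f j := by
  have hj : j ∈ univ.erase i := mem_erase.2 ⟨hij.symm, mem_univ j⟩
  rw [← mul_prod_erase univ f (mem_univ i), ← mul_prod_erase _ f hj,
    ← mul_prod_erase univ g (mem_univ i), ← mul_prod_erase _ g hj]
  have hrest : ∏ l ∈ (univ.erase i).erase j, f l = ∏ l ∈ (univ.erase i).erase j, g l :=
    Finset.prod_congr rfl fun l hl => hfg l (mem_erase.1 (mem_erase.1 hl).2).1 (mem_erase.1 hl).1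
  rw [hrest]
  ac_rfl

section Bernstein

open Polynomial

namespace bernsteinPolynomial

theorem eval_one_sub_le {n ν : ℕ} (h : 2 * ν ≤ n) {p : ℝ} (hp0 : 0 ≤ p) (hp : p ≤ 1 - p) :
    (bernsteinPolynomial ℝ n ν).eval (1 - p) ≤ (bernsteinPolynomial ℝ n ν).eval p := by
  obtain ⟨t, rfl⟩ : ∃ t, n = 2 * ν + t := ⟨n - 2 * ν, by omega⟩
  simp only [bernsteinPolynomial, eval_mul, eval_pow, eval_sub, eval_one, eval_X, eval_natCast,
    sub_sub_cancel, show 2 * ν + t - ν = ν + t by omega, pow_add]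
  have hC : (0 : ℝ) ≤ (2 * ν + t).choose ν * (p ^ ν * (1 - p) ^ ν) := by
    have : 0 ≤ 1 - p := by linarith
    positivity
  calc _ = (2 * ν + t).choose ν * (p ^ ν * (1 - p) ^ ν) * p ^ t := by ring
    _ ≤ (2 * ν + t).choose ν * (p ^ ν * (1 - p) ^ ν) * (1 - p) ^ t :=
      mul_le_mul_of_nonneg_left (pow_le_pow_left₀ hp0 hp t) hC
    _ = _ := by ring

theorem derivative_sum_Icc {m l : ℕ} (hl : 1 ≤ l) (hlm : 2 * l ≤ m) :
    derivative (∑ k ∈ Icc l (m - l), bernsteinPolynomial ℝ m k) =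
      m * (bernsteinPolynomial ℝ (m - 1) (l - 1) -
        (bernsteinPolynomial ℝ (m - 1) (l - 1)).comp (1 - X)) := by
  set g : ℕ → ℝ[X] := fun k => -(m * bernsteinPolynomial ℝ (m - 1) (k - 1))
  have hg : ∀ k ∈ Icc l (m - l), derivative (bernsteinPolynomial ℝ m k) = g (k + 1) - g k := by
    intro k hk
    obtain ⟨k, rfl⟩ : ∃ k', k = k' + 1 := ⟨k - 1, by grind⟩
    simp only [g, derivative_succ, add_tsub_cancel_right]
    ring
  rw [flip _ _ _ (by omega), show m - 1 - (l - 1) = m - l by omega, derivative_sum,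
    sum_congr rfl hg, sum_Icc_sub (by omega)]
  simp only [g, show m - l + 1 - 1 = m - l by omega]
  ring

theorem eval_sum_Icc_le_eval_half (m l : ℕ) {p : ℝ} (hp0 : 0 ≤ p) (hp1 : p ≤ 1) :
    (∑ k ∈ Icc l (m - l), bernsteinPolynomial ℝ m k).eval p ≤
      (∑ k ∈ Icc l (m - l), bernsteinPolynomial ℝ m k).eval (1 / 2) := by
  set W := ∑ k ∈ Icc l (m - l), bernsteinPolynomial ℝ m k
  rcases lt_or_ge m (2 * l) with hml | hlm
  · simp [W, Icc_eq_empty_of_lt (show m - l < l by omega)]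
  rcases Nat.eq_zero_or_pos l with rfl | hl
  · simp [W, ← Nat.range_succ_eq_Icc_zero, bernsteinPolynomial.sum]
  set g := bernsteinPolynomial ℝ (m - 1) (l - 1)
  have hderiv (x : ℝ) : deriv (fun x => W.eval x) x = m * (g.eval x - g.eval (1 - x)) := by
    rw [Polynomial.deriv, derivative_sum_Icc hl hlm]
    simp [g]
  have hg {x : ℝ} (hx0 : 0 ≤ x) (hx : x ≤ 1 - x) : g.eval (1 - x) ≤ g.eval x :=
    eval_one_sub_le (by omega) hx0 hx
  rcases le_total p (1 / 2) with hp | hp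
  · refine monotoneOn_of_deriv_nonneg (convex_Icc 0 (1 / 2)) W.continuousOn W.differentiableOn
      (fun x hx => ?_) ⟨hp0, hp⟩ ⟨by norm_num, le_rfl⟩ hp
    rw [interior_Icc] at hx
    rw [hderiv]
    exact mul_nonneg m.cast_nonneg (sub_nonneg.2 (hg hx.1.le (by linarith [hx.2])))
  · refine antitoneOn_of_deriv_nonpos (convex_Icc (1 / 2) 1) W.continuousOn W.differentiableOn
      (fun x hx => ?_) ⟨le_rfl, by norm_num⟩ ⟨hp, hp1⟩ hp
    rw [interior_Icc] at hx
    have := hg (x := 1 - x) (by linarith [hx.2]) (by linarith [hx.1])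
    rw [sub_sub_cancel] at this
    rw [hderiv]
    exact mul_nonpos_of_nonneg_of_nonpos m.cast_nonneg (sub_nonpos.2 this)

theorem sum_Icc_mul_pow_mul_pow (m l : ℕ) (t p : ℝ) :
    ∑ k ∈ Icc l (m - l), (m.choose k : ℝ) * ((t * p) ^ k * (t * (1 - p)) ^ (m - k)) =
      t ^ m * (∑ k ∈ Icc l (m - l), bernsteinPolynomial ℝ m k).eval p := by
  rw [eval_finsetSum, mul_sum]
  refine sum_congr rfl fun k hk => ?_
  rw [← pow_mul_pow_sub t (show k ≤ m by grind), mul_pow, mul_pow]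
  simp only [bernsteinPolynomial, eval_mul, eval_pow, eval_sub, eval_one, eval_X, eval_natCast]
  ring

end bernsteinPolynomial

theorem sum_Icc_choose_mul_pow_mul_pow_le (m l : ℕ) {a b : ℝ} (ha : 0 ≤ a) (hb : 0 ≤ b) :
    ∑ k ∈ Icc l (m - l), (m.choose k : ℝ) * (a ^ k * b ^ (m - k)) ≤
      ∑ k ∈ Icc l (m - l), (m.choose k : ℝ) * (((a + b) / 2) ^ k * ((a + b) / 2) ^ (m - k)) := by
  rcases (add_nonneg ha hb).eq_or_lt with hab | hab
  · obtain ⟨rfl, rfl⟩ : a = 0 ∧ b = 0 := ⟨by linarith, by linarith⟩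
    norm_num
  have hp : a / (a + b) ≤ 1 := (div_le_one hab).2 (by linarith)
  have key := bernsteinPolynomial.eval_sum_Icc_le_eval_half m l (by positivity) hp
  have h1 := bernsteinPolynomial.sum_Icc_mul_pow_mul_pow m l (a + b) (a / (a + b))
  have h2 := bernsteinPolynomial.sum_Icc_mul_pow_mul_pow m l (a + b) (1 / 2)
  rw [mul_div_cancel₀ _ hab.ne', mul_one_sub, mul_div_cancel₀ _ hab.ne', add_sub_cancel_left] at h1
  rw [show (a + b) * (1 - 1 / 2) = (a + b) / 2 by ring, ← div_eq_mul_one_div] at h2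
  rw [h1, h2]
  exact mul_le_mul_of_nonneg_left key (by positivity)

end Bernstein

theorem exists_filter_range_eq_Icc {m : ℕ} {P : ℕ → Prop} [DecidablePred P]
    (hP : ∀ k₁ k₂, k₁ ≤ m → k₂ ≤ m → max k₂ (m - k₂) ≤ max k₁ (m - k₁) → P k₁ → P k₂) :
    ∃ l, (range (m + 1)).filter P = Icc l (m - l) := by
  by_cases h : ∃ k, k ≤ m ∧ P k
  · refine ⟨Nat.find h, ?_⟩
    obtain ⟨hlm, hl⟩ := Nat.find_spec h
    have hsymm {k : ℕ} (hk : k ≤ m) (hPk : P k) : m - k ≤ m ∧ P (m - k) :=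
      ⟨by omega, hP k (m - k) hk (by omega) (by omega) hPk⟩
    have hl' := Nat.find_min' h (hsymm hlm hl)
    ext k
    simp only [mem_filter, mem_range, mem_Icc]
    constructor
    · rintro ⟨hk, hPk⟩
      have h1 := Nat.find_min' h ⟨by omega, hPk⟩
      have h2 := Nat.find_min' h (hsymm (by omega) hPk)
      omega
    · rintro ⟨h1, h2⟩
      exact ⟨by omega, hP _ k hlm (by omega) (by omega) hl⟩
  · refine ⟨m + 1, ?_⟩
    ext k
    simp only [mem_filter, mem_range, mem_Icc]
    grind

theorem sum_range_ite_le_of_balanced {m : ℕ} {P : ℕ → Prop} [DecidablePred P]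
    (hP : ∀ k₁ k₂, k₁ ≤ m → k₂ ≤ m → max k₂ (m - k₂) ≤ max k₁ (m - k₁) → P k₁ → P k₂)
    {a b : ℝ} (ha : 0 ≤ a) (hb : 0 ≤ b) :
    ∑ k ∈ range (m + 1), (if P k then a ^ k / k ! * (b ^ (m - k) / (m - k)!) else 0) ≤
      ∑ k ∈ range (m + 1),
        (if P k then ((a + b) / 2) ^ k / k ! * (((a + b) / 2) ^ (m - k) / (m - k)!) else 0) := by
  have hterm (u v : ℝ) : ∀ k ∈ (range (m + 1)).filter P,
      u ^ k / k ! * (v ^ (m - k) / (m - k)!) = m.choose k * (u ^ k * v ^ (m - k)) / m ! := by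
    intro k hk
    rw [Nat.cast_choose ℝ (show k ≤ m by grind)]
    field_simp
  obtain ⟨l, hl⟩ := exists_filter_range_eq_Icc hP
  rw [← sum_filter, ← sum_filter, sum_congr rfl (hterm a b), sum_congr rfl (hterm _ _), ← sum_div,
    ← sum_div, hl]
  refine div_le_div_of_nonneg_right ?_ (by positivity)
  exact sum_Icc_choose_mul_pow_mul_pow_le m l ha hb

theorem Finset.sum_le_sum_of_card_sdiff_le {ι : Type*} [DecidableEq ι] {T F : Finset ι}
    {v : ι → ℕ} (hcard : #(T \ F) ≤ #(F \ T)) (h : ∀ a ∈ T \ F, ∀ b ∈ F \ T, v a ≤ v b) :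
    ∑ i ∈ T, v i ≤ ∑ i ∈ F, v i := by
  suffices ∑ i ∈ T \ F, v i ≤ ∑ i ∈ F \ T, v i by
    rw [← sum_inter_add_sum_sdiff T F, ← sum_inter_add_sum_sdiff F T, inter_comm]
    omega
  rcases (F \ T).eq_empty_or_nonempty with hFT | hFT
  · rw [hFT, card_empty, Nat.le_zero, card_eq_zero] at hcard
    simp [hcard]
  obtain ⟨b, hb, hmin⟩ := exists_min_image (F \ T) v hFT
  calc ∑ i ∈ T \ F, v i ≤ #(T \ F) • v b := sum_le_card_nsmul _ _ _ fun a ha => h a ha b hb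
    _ ≤ #(F \ T) • v b := nsmul_le_nsmul_left (Nat.zero_le _) hcard
    _ ≤ ∑ i ∈ F \ T, v i := card_nsmul_le_sum _ _ _ hmin

theorem Antitone.sum_le_sum_filter_val_lt {s k : ℕ} {v : Fin s → ℕ} (hv : Antitone v)
    {T : Finset (Fin s)} (hT : #T ≤ k) :
    ∑ i ∈ T, v i ≤ ∑ i ∈ univ.filter (fun i : Fin s => (i : ℕ) < k), v i := by
  set F := univ.filter (fun i : Fin s => (i : ℕ) < k)
  refine sum_le_sum_of_card_sdiff_le ?_ fun a ha b hb => hv ?_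
  · have hTF : #T ≤ #F := by
      rw [Fin.card_filter_val_lt]
      exact le_min (card_le_univ T |>.trans_eq (Fintype.card_fin s)) hT
    have h1 := card_sdiff_add_card_inter T F
    have h2 := card_sdiff_add_card_inter F T
    rw [inter_comm] at h2
    omega
  · simp only [F, mem_sdiff, mem_filter, mem_univ, true_and] at ha hb
    exact Fin.le_def.2 (by omega)

theorem sum_le_max_sum_swap {ι : Type*} [Fintype ι] [DecidableEq ι] {d d' : ι → ℕ} {i j : ι}
    (hij : i ≠ j) (hpair : d' i + d' j = d i + d j)
    (hoff : ∀ l, l ≠ i → l ≠ j → d' l = d l) (hmax : max (d' i) (d' j) ≤ max (d i) (d j))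
    (T : Finset ι) :
    ∑ l ∈ T, d' l ≤ max (∑ l ∈ T, d l) (∑ l ∈ T, d (Equiv.swap i j l)) := by
  have key (g : ι → ℕ) (hg : ∀ l, l ≠ i → l ≠ j → d' l = g l) :
      ∑ l ∈ T, d' l + (if i ∈ T then g i else 0) + (if j ∈ T then g j else 0) =
        ∑ l ∈ T, g l + (if i ∈ T then d' i else 0) + (if j ∈ T then d' j else 0) := by
    simpa [Fintype.sum_ite_mem] using Fintype.sum_add_add_eq_of_eq_off_pair hij
      (f := fun l => if l ∈ T then d' l else 0) (g := fun l => if l ∈ T then g l else 0)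
      fun l hi hj => by rw [hg l hi hj]
  have h₁ := key d hoff
  have h₂ := key (fun l => d (Equiv.swap i j l)) fun l hi hj => by
    rw [Equiv.swap_apply_of_ne_of_ne hi hj, hoff l hi hj]
  simp only [Equiv.swap_apply_left, Equiv.swap_apply_right] at h₂
  split_ifs at h₁ h₂ <;> omega

theorem exists_antitone_comp_perm {n : ℕ} (f : Fin n → ℕ) :
    ∃ τ : Equiv.Perm (Fin n), Antitone (f ∘ τ) :=
  ⟨Fin.revPerm.trans (Tuple.sort f), fun _ _ hab => Tuple.monotone_sort f (Fin.rev_le_rev.2 hab)⟩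

-- The sorted rearrangement of `d'` is dominated by that of `d`: on any index set, `d'` sums to at
-- most what `d` or `d ∘ swap i j` sums to.
theorem exists_perm_comp_mem_of_pairMove {r s : ℕ} {A : Set (Fin s → ℕ)} (hA : A ⊆ Pset r s)
    (hdc : DownClosed r s A) {d d' : Fin s → ℕ} {i j : Fin s} (hij : i ≠ j)
    (hpair : d' i + d' j = d i + d j) (hoff : ∀ l, l ≠ i → l ≠ j → d' l = d l)
    (hmax : max (d' i) (d' j) ≤ max (d i) (d j)) (hd : ∃ σ : Equiv.Perm (Fin s), d ∘ σ ∈ A) :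
    ∃ τ : Equiv.Perm (Fin s), d' ∘ τ ∈ A := by
  obtain ⟨σ, hσ⟩ := hd
  obtain ⟨τ, hτ⟩ := exists_antitone_comp_perm d'
  have hsum : ∑ l, d' l = ∑ l, d l := by
    have := Fintype.sum_add_add_eq_of_eq_off_pair hij hoff
    omega
  have hle (k : ℕ) (U : Finset (Fin s)) (hU : #U ≤ k) :
      ∑ l ∈ U, d l ≤ ∑ l ∈ univ.filter (fun l : Fin s => (l : ℕ) < k), (d ∘ σ) l := by
    have hanti : Antitone (d ∘ σ) := fun a b hab => (hA hσ).1 a b hab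
    simpa [sum_map] using hanti.sum_le_sum_filter_val_lt (T := U.map σ.symm.toEmbedding)
      (by rwa [card_map])
  refine ⟨τ, hdc _ hσ _ ⟨fun a b hab => hτ hab, ?_⟩ fun k => ?_⟩
  · rw [Function.comp_def, Equiv.sum_comp τ d', hsum, ← Equiv.sum_comp σ d]
    exact (hA hσ).2
  · set F := univ.filter (fun l : Fin s => (l : ℕ) < k)
    have hF : #(F.map τ.toEmbedding) ≤ k := by
      rw [card_map, Fin.card_filter_val_lt]
      exact min_le_right _ _
    calc ∑ l ∈ F, (d' ∘ τ) l = ∑ l ∈ F.map τ.toEmbedding, d' l := by simp [sum_map]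
      _ ≤ max (∑ l ∈ F.map τ.toEmbedding, d l)
          (∑ l ∈ F.map τ.toEmbedding, d (Equiv.swap i j l)) :=
        sum_le_max_sum_swap hij hpair hoff hmax _
      _ ≤ ∑ l ∈ F, (d ∘ σ) l := by
        refine max_le (hle k _ hF) ?_
        simpa [sum_map] using hle k ((F.map τ.toEmbedding).map (Equiv.swap i j).toEmbedding)
          (by rwa [card_map])

theorem sum_update_update {s : ℕ} {i j : Fin s} (hij : i ≠ j) (d : Fin s → ℕ) (a b : ℕ) :
    ∑ l, update (update d i a) j b l + d i + d j = ∑ l, d l + a + b := by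
  simpa [update_of_ne hij] using Fintype.sum_add_add_eq_of_eq_off_pair hij
    (f := update (update d i a) j b) (g := d) fun l hi hj => by
      rw [update_of_ne hj, update_of_ne hi]

theorem sum_filter_update_update_eq_sum_range {M : Type*} [AddCommMonoid M] {s r : ℕ}
    {i j : Fin s} (hij : i ≠ j) {e : Fin s → ℕ} (hei : e i = 0) (hej : e j = 0)
    (her : ∑ l, e l ≤ r) (f : (Fin s → ℕ) → M) :
    ∑ d ∈ Nat.antidiagonalTuple s r with update (update d i 0) j 0 = e, f d =
      ∑ k ∈ range (r - ∑ l, e l + 1), f (update (update e i k) j (r - ∑ l, e l - k)) := by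
  set m := r - ∑ l, e l
  have hfib {d : Fin s → ℕ} (hd : d ∈ Nat.antidiagonalTuple s r)
      (hde : update (update d i 0) j 0 = e) : d i + d j = m := by
    have := sum_update_update hij d 0 0
    rw [hde, Nat.mem_antidiagonalTuple.1 hd] at this
    omega
  have hinv {d : Fin s → ℕ} (hd : d ∈ Nat.antidiagonalTuple s r)
      (hde : update (update d i 0) j 0 = e) : update (update e i (d i)) j (m - d i) = d := by
    have := hfib hd hde
    ext l
    rcases eq_or_ne l j with rfl | hlj
    · rw [update_self]
      omega
    rcases eq_or_ne l i with rfl | hli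
    · rw [update_of_ne hij, update_self]
    · rw [update_of_ne hlj, update_of_ne hli, ← hde, update_of_ne hlj, update_of_ne hli]
  refine sum_nbij' (fun d => d i) (fun k => update (update e i k) j (m - k))
    (fun d hd => ?_) (fun k hk => ?_) (fun d hd => hinv (mem_filter.1 hd).1 (mem_filter.1 hd).2)
    (fun k _ => ?_) (fun d hd => congrArg f (hinv (mem_filter.1 hd).1 (mem_filter.1 hd).2).symm)
  · have := hfib (mem_filter.1 hd).1 (mem_filter.1 hd).2
    rw [mem_range]
    omega
  · rw [mem_range] at hk
    have := sum_update_update hij e k (m - k)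
    simp only [mem_filter, Nat.mem_antidiagonalTuple]
    refine ⟨by omega, ?_⟩
    ext l
    simp only [update_apply]
    split_ifs <;> simp_all
  · simp [update_of_ne hij]

theorem sum_antidiagonalTuple_eq_sum_sum_range {M : Type*} [AddCommMonoid M] {s r : ℕ}
    {i j : Fin s} (hij : i ≠ j) (f : (Fin s → ℕ) → M) :
    ∑ d ∈ Nat.antidiagonalTuple s r, f d =
      ∑ e ∈ (Nat.antidiagonalTuple s r).image (fun d => update (update d i 0) j 0),
        ∑ k ∈ range (r - ∑ l, e l + 1), f (update (update e i k) j (r - ∑ l, e l - k)) := by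
  rw [← sum_fiberwise_of_maps_to fun d hd =>
    mem_image_of_mem (fun d => update (update d i 0) j 0) hd]
  refine sum_congr rfl fun e he => ?_
  obtain ⟨d, hd, rfl⟩ := mem_image.1 he
  have := sum_update_update hij d 0 0
  rw [Nat.mem_antidiagonalTuple] at hd
  exact sum_filter_update_update_eq_sum_range hij (by simp [update_of_ne hij]) (by simp)
    (by omega) f

section StdSimplex

variable {ι : Type*} [Fintype ι] {x : ι → ℝ}

theorem const_mem_stdSimplex [Nonempty ι] :
    (fun _ => 1 / (Fintype.card ι : ℝ)) ∈ stdSimplex ℝ ι :=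
  ⟨fun _ => by positivity, by simp⟩

theorem eq_const_of_mem_stdSimplex (hx : x ∈ stdSimplex ℝ ι) (hconst : ∀ i j, x i = x j) :
    x = fun _ => 1 / (Fintype.card ι : ℝ) := by
  funext l
  have := hx.2
  rw [sum_congr rfl fun l' _ => hconst l' l, sum_const, card_univ, nsmul_eq_mul] at this
  rw [eq_div_iff (by rintro h; simp [h] at this)]
  linarith

end StdSimplex

section AvgPair

variable {ι : Type*} [DecidableEq ι] {x : ι → ℝ} {i j : ι}

noncomputable def avgPair (x : ι → ℝ) (i j : ι) : ι → ℝ :=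
  update (update x i ((x i + x j) / 2)) j ((x i + x j) / 2)

theorem avgPair_apply_left (hij : i ≠ j) : avgPair x i j i = (x i + x j) / 2 := by
  rw [avgPair, update_of_ne hij, update_self]

theorem avgPair_apply_right : avgPair x i j j = (x i + x j) / 2 := update_self ..

theorem avgPair_apply_of_ne {l : ι} (hli : l ≠ i) (hlj : l ≠ j) : avgPair x i j l = x l := by
  rw [avgPair, update_of_ne hlj, update_of_ne hli]

variable [Fintype ι]

theorem sum_comp_avgPair (g : ℝ → ℝ) (hij : i ≠ j) :
    ∑ l, g (avgPair x i j l) + g (x i) + g (x j) = ∑ l, g (x l) + 2 * g ((x i + x j) / 2) := by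
  rw [Fintype.sum_add_add_eq_of_eq_off_pair hij (g := fun l => g (x l)) fun l hli hlj => by
    rw [avgPair_apply_of_ne hli hlj], avgPair_apply_left hij, avgPair_apply_right]
  ring

theorem avgPair_mem_stdSimplex (hx : x ∈ stdSimplex ℝ ι) (hij : i ≠ j) :
    avgPair x i j ∈ stdSimplex ℝ ι := by
  refine ⟨fun l => ?_, ?_⟩
  · have := hx.1 i
    have := hx.1 j
    rcases eq_or_ne l i with rfl | hli
    · rw [avgPair_apply_left hij]; positivity
    rcases eq_or_ne l j with rfl | hlj
    · rw [avgPair_apply_right]; positivity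
    · rw [avgPair_apply_of_ne hli hlj]; exact hx.1 l
  · have := sum_comp_avgPair id hij (x := x)
    simp only [id, hx.2] at this
    linarith

theorem sum_sq_avgPair_lt (hne : x i ≠ x j) : ∑ l, avgPair x i j l ^ 2 < ∑ l, x l ^ 2 := by
  have := sum_comp_avgPair (· ^ 2) (fun h => hne (congrArg x h)) (x := x)
  have := pow_pos (abs_pos.2 (sub_ne_zero.2 hne)) 2
  rw [sq_abs] at this
  linarith

theorem isMaxOn_const_of_le_avgPair [Nonempty ι] {f : (ι → ℝ) → ℝ}
    (hf : ContinuousOn f (stdSimplex ℝ ι))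
    (havg : ∀ x ∈ stdSimplex ℝ ι, ∀ i j, i ≠ j → f x ≤ f (avgPair x i j)) :
    IsMaxOn f (stdSimplex ℝ ι) (fun _ => 1 / (Fintype.card ι : ℝ)) := by
  obtain ⟨z, hz, hzmax⟩ := (isCompact_stdSimplex ℝ ι).exists_isMaxOn ⟨_, const_mem_stdSimplex⟩ hf
  have hM : IsCompact (stdSimplex ℝ ι ∩ f ⁻¹' {f z}) :=
    (isCompact_stdSimplex ℝ ι).of_isClosed_subset
      (hf.preimage_isClosed_of_isClosed (isClosed_stdSimplex ℝ ι) isClosed_singleton)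
      Set.inter_subset_left
  obtain ⟨w, ⟨hw, hwz⟩, hwmin⟩ := hM.exists_isMinOn ⟨z, hz, rfl⟩
    (f := fun x => ∑ l, x l ^ 2) (by fun_prop)
  have hconst : ∀ i j, w i = w j := by
    by_contra! ⟨i, j, hne⟩
    have hij : i ≠ j := fun h => hne (congrArg w h)
    have hmem := avgPair_mem_stdSimplex hw hij
    have hle : f (avgPair w i j) = f z :=
      le_antisymm (hzmax hmem) (hwz ▸ havg w hw i j hij)
    exact (sum_sq_avgPair_lt hne).not_ge (hwmin ⟨hmem, hle⟩)
  rw [← eq_const_of_mem_stdSimplex hw hconst]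
  intro x hx
  exact (hzmax hx).trans_eq hwz.symm

end AvgPair

open Classical in
theorem lamA_eq_sum_antidiagonalTuple (r s : ℕ) (A : Set (Fin s → ℕ)) (x : Fin s → ℝ) :
    lamA r s A x = r ! * ∑ d ∈ Nat.antidiagonalTuple s r,
      if ∃ σ : Equiv.Perm (Fin s), d ∘ σ ∈ A then ∏ l, x l ^ d l / (d l)! else 0 := by
  have hmod {d : Fin s → ℕ} (hd : d ∈ Nat.antidiagonalTuple s r) (l : Fin s) :
      d l % (r + 1) = d l :=
    Nat.mod_eq_of_lt <| Nat.lt_succ_of_le <| (single_le_sum (fun _ _ => Nat.zero_le _)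
      (mem_univ l)).trans (Nat.mem_antidiagonalTuple.1 hd).le
  rw [lamA, mul_sum]
  simp only [ite_and, ← sum_filter, mul_ite, mul_zero]
  refine sum_nbij' (fun d l => (d l : ℕ)) (fun d l => Fin.ofNat (r + 1) (d l)) ?_ ?_ ?_ ?_ ?_
  · intro d hd
    simp only [mem_filter, mem_univ, true_and] at hd ⊢
    exact ⟨Nat.mem_antidiagonalTuple.2 hd.1, hd.2⟩
  · intro d hd
    simp only [mem_filter, mem_univ, true_and] at hd ⊢
    simp only [Fin.val_ofNat, hmod hd.1]
    exact ⟨Nat.mem_antidiagonalTuple.1 hd.1, hd.2⟩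
  · intro d _
    funext l
    simp
  · intro d hd
    simp only [mem_filter] at hd
    funext l
    simp [hmod hd.1]
  · intro d _
    rfl

theorem continuous_lamA (r s : ℕ) (A : Set (Fin s → ℕ)) : Continuous (lamA r s A) := by
  unfold lamA
  refine continuous_finsetSum _ fun d _ => ?_
  split_ifs <;> fun_prop

theorem prod_pow_div_factorial_update_update {ι : Type*} [Fintype ι] [DecidableEq ι] {i j : ι}
    (hij : i ≠ j) {x y : ι → ℝ} (hxy : ∀ l, l ≠ i → l ≠ j → y l = x l) {e : ι → ℕ}
    (hei : e i = 0) (hej : e j = 0) (a b : ℕ) :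
    ∏ l, y l ^ update (update e i a) j b l / (update (update e i a) j b l)! =
      y i ^ a / a ! * (y j ^ b / b !) * ∏ l, x l ^ e l / (e l)! := by
  have := Fintype.prod_mul_mul_eq_of_eq_off_pair hij
    (f := fun l => y l ^ update (update e i a) j b l / (update (update e i a) j b l)!)
    (g := fun l => x l ^ e l / (e l)!) fun l hli hlj => by
      rw [update_of_ne hlj, update_of_ne hli, hxy l hli hlj]
  simp only [hei, hej, update_self, update_of_ne hij, pow_zero, Nat.factorial_zero, Nat.cast_one,
    div_one, mul_one] at this
  rw [this]
  ring

open Classical in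
theorem lamA_le_lamA_avgPair {r s : ℕ} {A : Set (Fin s → ℕ)} (hA : A ⊆ Pset r s)
    (hdc : DownClosed r s A) {x : Fin s → ℝ} (hx : ∀ l, 0 ≤ x l) {i j : Fin s} (hij : i ≠ j) :
    lamA r s A x ≤ lamA r s A (avgPair x i j) := by
  rw [lamA_eq_sum_antidiagonalTuple, lamA_eq_sum_antidiagonalTuple,
    sum_antidiagonalTuple_eq_sum_sum_range hij, sum_antidiagonalTuple_eq_sum_sum_range hij]
  refine mul_le_mul_of_nonneg_left (sum_le_sum fun e he => ?_) (Nat.cast_nonneg _)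
  obtain ⟨hei, hej⟩ : e i = 0 ∧ e j = 0 := by
    obtain ⟨d, -, rfl⟩ := mem_image.1 he
    simp [update_of_ne hij]
  set m := r - ∑ l, e l
  have hterm (y : Fin s → ℝ) (hy : ∀ l, l ≠ i → l ≠ j → y l = x l) (k : ℕ) :
      (if ∃ σ : Equiv.Perm (Fin s), update (update e i k) j (m - k) ∘ σ ∈ A then
          ∏ l, y l ^ update (update e i k) j (m - k) l / (update (update e i k) j (m - k) l)!
        else 0) =
        (if ∃ σ : Equiv.Perm (Fin s), update (update e i k) j (m - k) ∘ σ ∈ A then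
          y i ^ k / k ! * (y j ^ (m - k) / (m - k)!) else 0) * ∏ l, x l ^ e l / (e l)! := by
    rw [prod_pow_div_factorial_update_update hij hy hei hej, ite_mul, zero_mul]
  simp only [hterm x (fun _ _ _ => rfl), hterm (avgPair x i j) (fun _ => avgPair_apply_of_ne),
    ← sum_mul, avgPair_apply_left hij, avgPair_apply_right]
  refine mul_le_mul_of_nonneg_right (sum_range_ite_le_of_balanced
    (fun k₁ k₂ hk₁ hk₂ hmax => exists_perm_comp_mem_of_pairMove hA hdc hij ?_ ?_ ?_) (hx i) (hx j))
    (prod_nonneg fun l _ => by have := hx l; positivity)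
  · simp only [update_self, update_of_ne hij]
    omega
  · intro l hli hlj
    simp only [update_of_ne hli, update_of_ne hlj]
  · simpa only [update_self, update_of_ne hij] using hmax

theorem stmt6_general (r s : ℕ) (hs : 2 ≤ s)
    (A : Set (Fin s → ℕ)) (hA : A ⊆ Pset r s) (hdc : DownClosed r s A) :
    LamA r s A = lamA r s A (fun _ => 1 / (s : ℝ)) := by
  have : Nonempty (Fin s) := ⟨⟨0, by omega⟩⟩
  have hmax := isMaxOn_const_of_le_avgPair (continuous_lamA r s A).continuousOn
    fun x hx i j hij => lamA_le_lamA_avgPair hA hdc hx.1 hij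
  rw [Fintype.card_fin] at hmax
  refine IsGreatest.csSup_eq ⟨⟨_, ?_, rfl⟩, fun _ ⟨x, hx, hxy⟩ => hxy ▸ hmax hx⟩
  simpa using const_mem_stdSimplex (ι := Fin s)

/-- For a down-closed `A ⊆ 𝒫_{r,s}`, the maximum of `λ_A` over the standard simplex is
attained at the uniform point: `Λ_A = λ_A(1/s, …, 1/s)`. -/
theorem stmt6 (r s : ℕ) (hr : 2 ≤ r) (hs : 2 ≤ s)
    (A : Set (Fin s → ℕ)) (hA : A ⊆ Pset r s) (hdc : DownClosed r s A) :
    LamA r s A = lamA r s A (fun _ => 1 / (s : ℝ)) :=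
  stmt6_general r s hs A hA hdc
end

section
/- Let r ≥ 1 and t ≥ 0 be integers and let S = { j ∈ {0,1,…,r} : |2j − r| ≤ t }. Then for all reals x, y ≥ 0: (Σ_{j∈S} binom(r,j)) · ((x+y)/2)^r ≥ Σ_{j∈S} binom(r,j) · x^j y^{r−j}. -/
/-!
Write `f j = x ^ j * y ^ (r - j)`. The symmetrised monomial `f j + f (r - j)` only grows as `j`
moves away from `r / 2`: the difference of two of them factors as
`x ^ k * y ^ k * (x ^ e - y ^ e) * (x ^ (d + e) - y ^ (d + e)) ≥ 0`. Since `S` and the binomial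
weights are invariant under `j ↦ r - j`, the weighted mean of `f` over `S` equals that of the
symmetrised monomial, so it is at most the weighted mean over the complement of `S`, hence at most
the mean over all of `{0, …, r}`, which is `((x + y) / 2) ^ r` by the binomial theorem.
-/

open Finset

lemma pow_sub_pow_mul_pow_sub_pow_nonneg {x y : ℝ} (hx : 0 ≤ x) (hy : 0 ≤ y) (m n : ℕ) :
    0 ≤ (x ^ m - y ^ m) * (x ^ n - y ^ n) := by
  rcases le_total x y with h | h
  · exact mul_nonneg_of_nonpos_of_nonpos (sub_nonpos.2 (pow_le_pow_left₀ hx h m))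
      (sub_nonpos.2 (pow_le_pow_left₀ hx h n))
  · exact mul_nonneg (sub_nonneg.2 (pow_le_pow_left₀ hy h m))
      (sub_nonneg.2 (pow_le_pow_left₀ hy h n))

def symmMonomial (r j : ℕ) (x y : ℝ) : ℝ := x ^ j * y ^ (r - j) + x ^ (r - j) * y ^ j

lemma symmMonomial_reflect {r j : ℕ} (hj : j ≤ r) (x y : ℝ) :
    symmMonomial r (r - j) x y = symmMonomial r j x y := by
  rw [symmMonomial, symmMonomial, Nat.sub_sub_self hj, add_comm]

lemma symmMonomial_min {r j : ℕ} (hj : j ≤ r) (x y : ℝ) :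
    symmMonomial r (min j (r - j)) x y = symmMonomial r j x y := by
  rcases min_cases j (r - j) with ⟨h, -⟩ | ⟨h, -⟩ <;> rw [h]
  exact symmMonomial_reflect hj x y

lemma symmMonomial_le_of_le {x y : ℝ} (hx : 0 ≤ x) (hy : 0 ≤ y) {r j k : ℕ}
    (hj : 2 * j ≤ r) (hkj : k ≤ j) : symmMonomial r j x y ≤ symmMonomial r k x y := by
  obtain ⟨e, rfl⟩ : ∃ e, j = k + e := ⟨j - k, by omega⟩
  obtain ⟨d, rfl⟩ : ∃ d, r = 2 * k + 2 * e + d := ⟨r - 2 * k - 2 * e, by omega⟩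
  have hgap : symmMonomial (2 * k + 2 * e + d) k x y -
      symmMonomial (2 * k + 2 * e + d) (k + e) x y =
        x ^ k * y ^ k * ((x ^ e - y ^ e) * (x ^ (d + e) - y ^ (d + e))) := by
    rw [symmMonomial, symmMonomial, show 2 * k + 2 * e + d - k = k + 2 * e + d by omega,
      show 2 * k + 2 * e + d - (k + e) = k + e + d by omega]
    ring
  have := mul_nonneg (mul_nonneg (pow_nonneg hx k) (pow_nonneg hy k))
    (pow_sub_pow_mul_pow_sub_pow_nonneg hx hy e (d + e))
  linarith

lemma abs_two_mul_sub_eq_sub_two_mul_min {r j : ℕ} (hj : j ≤ r) :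
    |2 * (j : ℤ) - r| = ((r - 2 * min j (r - j) : ℕ) : ℤ) := by
  rcases le_total (2 * j) r with h | h
  · rw [abs_of_nonpos (by omega)]; omega
  · rw [abs_of_nonneg (by omega)]; omega

lemma symmMonomial_le_of_abs_le {x y : ℝ} (hx : 0 ≤ x) (hy : 0 ≤ y) {r j k : ℕ}
    (hj : j ≤ r) (hk : k ≤ r) (h : |2 * (j : ℤ) - r| ≤ |2 * (k : ℤ) - r|) :
    symmMonomial r j x y ≤ symmMonomial r k x y := by
  rw [abs_two_mul_sub_eq_sub_two_mul_min hj, abs_two_mul_sub_eq_sub_two_mul_min hk,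
    Nat.cast_le] at h
  rw [← symmMonomial_min hj, ← symmMonomial_min hk]
  exact symmMonomial_le_of_le hx hy (by omega) (by omega)

def ReflectInvariant (r : ℕ) (s : Finset ℕ) : Prop := ∀ j ∈ s, j ≤ r ∧ r - j ∈ s

lemma sum_reflect_eq {M : Type*} [AddCommMonoid M] {s : Finset ℕ} {r : ℕ}
    (hs : ReflectInvariant r s) (f : ℕ → M) :
    ∑ j ∈ s, f (r - j) = ∑ j ∈ s, f j :=
  sum_nbij' (r - ·) (r - ·) (fun j hj => (hs j hj).2) (fun j hj => (hs j hj).2)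
    (fun j hj => Nat.sub_sub_self (hs j hj).1) (fun j hj => Nat.sub_sub_self (hs j hj).1)
    fun _ _ => rfl

lemma reflectInvariant_filter_abs {r : ℕ} (P : ℤ → Prop) [DecidablePred P] :
    ReflectInvariant r ((range (r + 1)).filter (fun j : ℕ => P |2 * (j : ℤ) - r|)) := by
  intro j hj
  rw [mem_filter, mem_range] at hj ⊢
  have hneg : 2 * ((r - j : ℕ) : ℤ) - r = -(2 * (j : ℤ) - r) := by omega
  exact ⟨by omega, by omega, by rw [hneg, abs_neg]; exact hj.2⟩

lemma two_mul_sum_choose_mul_pow_eq_sum_symmMonomial {s : Finset ℕ} {r : ℕ}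
    (hs : ReflectInvariant r s) (x y : ℝ) :
    2 * ∑ j ∈ s, (r.choose j : ℝ) * x ^ j * y ^ (r - j) =
      ∑ j ∈ s, (r.choose j : ℝ) * symmMonomial r j x y := by
  have hrefl : ∑ j ∈ s, (r.choose j : ℝ) * x ^ (r - j) * y ^ j =
      ∑ j ∈ s, (r.choose j : ℝ) * x ^ j * y ^ (r - j) := by
    rw [← sum_reflect_eq hs]
    refine sum_congr rfl fun j hj => ?_
    rw [Nat.choose_symm (hs j hj).1, Nat.sub_sub_self (hs j hj).1]
  rw [two_mul]
  nth_rewrite 2 [← hrefl]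
  rw [← sum_add_distrib]
  refine sum_congr rfl fun j _ => ?_
  rw [symmMonomial]
  ring

lemma sum_mul_sum_mul_le_of_forall_le {ι R : Type*}
    [CommSemiring R] [PartialOrder R] [IsOrderedRing R]
    {s t : Finset ι} {a g : ι → R} (hs : ∀ i ∈ s, 0 ≤ a i) (ht : ∀ j ∈ t, 0 ≤ a j)
    (hg : ∀ i ∈ s, ∀ j ∈ t, g i ≤ g j) :
    (∑ j ∈ t, a j) * ∑ i ∈ s, a i * g i ≤ (∑ i ∈ s, a i) * ∑ j ∈ t, a j * g j := by
  rw [sum_mul_sum, sum_mul_sum, sum_comm]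
  refine sum_le_sum fun i hi => sum_le_sum fun j hj => ?_
  calc a j * (a i * g i) = a i * a j * g i := by ring
    _ ≤ a i * a j * g j :=
      mul_le_mul_of_nonneg_left (hg i hi j hj) (mul_nonneg (hs i hi) (ht j hj))
    _ = a i * (a j * g j) := by ring

theorem stmt7_general (r t : ℕ) (x y : ℝ) (hx : 0 ≤ x) (hy : 0 ≤ y) :
    ∑ j ∈ (Finset.range (r + 1)).filter (fun j : ℕ => |2 * (j : ℤ) - (r : ℤ)| ≤ (t : ℤ)),
        (r.choose j : ℝ) * x ^ j * y ^ (r - j) ≤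
      (∑ j ∈ (Finset.range (r + 1)).filter (fun j : ℕ => |2 * (j : ℤ) - (r : ℤ)| ≤ (t : ℤ)),
        (r.choose j : ℝ)) * ((x + y) / 2) ^ r := by
  have hcross := sum_mul_sum_mul_le_of_forall_le
    (s := (range (r + 1)).filter (fun j : ℕ => |2 * (j : ℤ) - (r : ℤ)| ≤ (t : ℤ)))
    (t := (range (r + 1)).filter (fun j : ℕ => ¬ |2 * (j : ℤ) - (r : ℤ)| ≤ (t : ℤ)))
    (a := fun j => (r.choose j : ℝ))
    (g := fun j => symmMonomial r j x y) (fun _ _ => by positivity) (fun _ _ => by positivity)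
    (fun j hj k hk => symmMonomial_le_of_abs_le hx hy
      (Nat.lt_succ_iff.1 (mem_range.1 (mem_filter.1 hj).1))
      (Nat.lt_succ_iff.1 (mem_range.1 (mem_filter.1 hk).1))
      ((mem_filter.1 hj).2.trans (not_le.1 (mem_filter.1 hk).2).le))
  rw [← two_mul_sum_choose_mul_pow_eq_sum_symmMonomial
      (reflectInvariant_filter_abs (· ≤ (t : ℤ))),
    ← two_mul_sum_choose_mul_pow_eq_sum_symmMonomial
      (reflectInvariant_filter_abs (¬ · ≤ (t : ℤ)))] at hcross
  have hchoose := sum_filter_add_sum_filter_not (range (r + 1))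
    (fun j : ℕ => |2 * (j : ℤ) - (r : ℤ)| ≤ (t : ℤ)) (fun j => (r.choose j : ℝ))
  have hbinom := sum_filter_add_sum_filter_not (range (r + 1))
    (fun j : ℕ => |2 * (j : ℤ) - (r : ℤ)| ≤ (t : ℤ))
    (fun j => (r.choose j : ℝ) * x ^ j * y ^ (r - j))
  have hchoose_total : ∑ j ∈ range (r + 1), (r.choose j : ℝ) = 2 ^ r := by
    exact_mod_cast Nat.sum_range_choose r
  have hbinom_total :
      ∑ j ∈ range (r + 1), (r.choose j : ℝ) * x ^ j * y ^ (r - j) = (x + y) ^ r := by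
    rw [add_pow]
    exact sum_congr rfl fun j _ => by ring
  rw [div_pow, mul_div_assoc', le_div_iff₀ (by positivity), ← hchoose_total, ← hbinom_total,
    ← hchoose, ← hbinom]
  linarith

/-- Bunched Muirhead inequality: for `S = {j ∈ {0,…,r} : |2j − r| ≤ t}` and `x, y ≥ 0`,
`(Σ_{j∈S} C(r,j)) · ((x+y)/2)^r ≥ Σ_{j∈S} C(r,j) · x^j y^{r−j}`. -/
theorem stmt7 (r t : ℕ) (hr : 1 ≤ r) (x y : ℝ) (hx : 0 ≤ x) (hy : 0 ≤ y) :
    ∑ j ∈ (Finset.range (r + 1)).filter (fun j : ℕ => |2 * (j : ℤ) - (r : ℤ)| ≤ (t : ℤ)),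
        (r.choose j : ℝ) * x ^ j * y ^ (r - j) ≤
      (∑ j ∈ (Finset.range (r + 1)).filter (fun j : ℕ => |2 * (j : ℤ) - (r : ℤ)| ≤ (t : ℤ)),
        (r.choose j : ℝ)) * ((x + y) / 2) ^ r :=
  stmt7_general r t x y hx hy
end

section
/- Let r ≥ 2, s ≥ 3 and 0 ≤ j ≤ r be integers, and let A ⊆ 𝒫_{r,s} be down-closed with respect to the dominance order. Define A∖j ⊆ 𝒫_{r−j, s−1} to consist of those y ∈ 𝒫_{r−j,s−1} such that ⟨y, j⟩ ∈ A, where ⟨y, j⟩ is the non-increasing rearrangement of the s-tuple obtained from y by inserting the entry j. Then A∖j is down-closed in 𝒫_{r−j, s−1}. -/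
/-!
Write `S_k(x)` for the sum of the `k` largest entries of a non-increasing tuple `x`. If `x` is
non-increasing, then the sorted tuple `⟨x, j⟩` satisfies
`S_{k+1}⟨x, j⟩ = max (j + S_k x) (S_{k+1} x)`: the `k + 1` largest entries either contain the
inserted `j` or they do not. The right-hand side is monotone in the prefix sums of `x`, so
`x ⪰ y` implies `⟨x, j⟩ ⪰ ⟨y, j⟩`, and down-closedness of `A` passes to `A∖j`.
-/

open Finset

def prefixSum {n : ℕ} (z : Fin n → ℕ) (k : ℕ) : ℕ :=
  ∑ i ∈ univ.filter (fun i : Fin n => (i : ℕ) < k), z i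

lemma card_filter_val_lt_le (n k : ℕ) : #(univ.filter (fun i : Fin n => (i : ℕ) < k)) ≤ k := by
  rw [Fin.card_filter_val_lt]
  exact min_le_right n k

lemma dominates_of_prefixSum_succ_le {n : ℕ} {x y : Fin n → ℕ}
    (h : ∀ k, prefixSum y (k + 1) ≤ prefixSum x (k + 1)) : Dominates x y := by
  rintro (_ | k)
  · simp
  · exact h k

lemma exists_perm_antitone_comp {α : Type*} [LinearOrder α] {n : ℕ} (f : Fin n → α) :
    ∃ σ : Equiv.Perm (Fin n), Antitone (f ∘ σ) :=
  ⟨Tuple.sort (OrderDual.toDual ∘ f), Tuple.monotone_sort (OrderDual.toDual ∘ f)⟩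

lemma StrictMono.val_le_val_apply {c n : ℕ} {f : Fin c → Fin n} (hf : StrictMono f) (m : Fin c) :
    (m : ℕ) ≤ f m := by
  have h := card_le_card_of_injOn f (s := Iic m) (t := Iic (f m))
    (fun i hi => by simpa using hf.monotone (by simpa using hi)) hf.injective.injOn
  simpa using h

lemma Antitone.sum_le_prefixSum {n k : ℕ} {z : Fin n → ℕ} (hz : Antitone z) {T : Finset (Fin n)}
    (hT : #T ≤ k) : ∑ i ∈ T, z i ≤ prefixSum z k := by
  obtain ⟨c, hc⟩ : ∃ c, #T = c := ⟨_, rfl⟩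
  have hn : c ≤ n := hc ▸ by simpa using card_le_univ T
  set e := T.orderEmbOfFin hc
  calc ∑ i ∈ T, z i = ∑ i ∈ univ.map e.toEmbedding, z i := by rw [map_orderEmbOfFin_univ]
    _ = ∑ m, z (e m) := sum_map _ _ _
    _ ≤ ∑ m, z (Fin.castLE hn m) :=
        sum_le_sum fun m _ => hz (Fin.le_def.2 (e.strictMono.val_le_val_apply m))
    _ = ∑ i ∈ univ.map (Fin.castLEEmb hn), z i := by rw [sum_map]; rfl
    _ ≤ prefixSum z k := by
        refine sum_le_sum_of_subset fun i hi => ?_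
        simp only [mem_map, mem_univ, true_and, Fin.castLEEmb_apply] at hi
        obtain ⟨m, rfl⟩ := hi
        simp only [mem_filter, mem_univ, true_and, Fin.val_castLE]
        omega

lemma sum_le_prefixSum_comp_perm {n k : ℕ} {f : Fin n → ℕ} {σ : Equiv.Perm (Fin n)}
    (hf : Antitone (f ∘ σ)) {T : Finset (Fin n)} (hT : #T ≤ k) :
    ∑ i ∈ T, f i ≤ prefixSum (f ∘ σ) k := by
  have h := hf.sum_le_prefixSum (T := T.map σ.symm.toEmbedding) (by simpa using hT)
  simpa [sum_map] using h

lemma exists_card_le_prefixSum_comp_perm_eq {n : ℕ} (f : Fin n → ℕ) (σ : Equiv.Perm (Fin n))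
    (k : ℕ) : ∃ T : Finset (Fin n), #T ≤ k ∧ prefixSum (f ∘ σ) k = ∑ i ∈ T, f i :=
  ⟨_, (card_map _).trans_le (card_filter_val_lt_le n k), (sum_map _ σ.toEmbedding f).symm⟩

lemma sum_fin_cons_eq_ite_add {M : Type*} [AddCommMonoid M] {n : ℕ} (j : M) (x : Fin n → M)
    (T : Finset (Fin (n + 1))) :
    ∑ i ∈ T, Fin.cons j x i =
      (if 0 ∈ T then j else 0) + ∑ i ∈ univ.filter (fun i : Fin n => i.succ ∈ T), x i := by
  rw [← univ_inter T, ← sum_ite_mem, Fin.sum_univ_succ, sum_filter]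
  simp only [Fin.cons_zero, Fin.cons_succ, univ_inter]

lemma card_eq_ite_add_card_filter_succ_mem {n : ℕ} (T : Finset (Fin (n + 1))) :
    #T = (if 0 ∈ T then 1 else 0) + #(univ.filter (fun i : Fin n => i.succ ∈ T)) := by
  rw [card_eq_sum_ones, card_eq_sum_ones, ← sum_fin_cons_eq_ite_add 1 (fun _ => 1) T]
  exact sum_congr rfl fun i _ => by cases i using Fin.cases <;> rfl

lemma sum_fin_cons_le_max {n k : ℕ} (j : ℕ) {x : Fin n → ℕ} (hx : Antitone x)
    {T : Finset (Fin (n + 1))} (hT : #T ≤ k + 1) :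
    ∑ i ∈ T, Fin.cons j x i ≤ max (j + prefixSum x k) (prefixSum x (k + 1)) := by
  have hcard := card_eq_ite_add_card_filter_succ_mem T
  rw [sum_fin_cons_eq_ite_add]
  split_ifs at hcard ⊢
  · exact le_max_of_le_left (Nat.add_le_add_left (hx.sum_le_prefixSum (by omega)) j)
  · exact le_max_of_le_right ((zero_add _).trans_le (hx.sum_le_prefixSum (by omega)))

lemma le_prefixSum_succ_fin_cons {n : ℕ} (j k : ℕ) (x : Fin n → ℕ) {σ : Equiv.Perm (Fin (n + 1))}
    (hz : Antitone (Fin.cons j x ∘ σ)) :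
    max (j + prefixSum x k) (prefixSum x (k + 1)) ≤ prefixSum (Fin.cons j x ∘ σ) (k + 1) := by
  have hP := card_filter_val_lt_le n
  refine max_le ?_ ?_
  · calc j + prefixSum x k
          = ∑ i ∈ cons 0 ((univ.filter fun i : Fin n => (i : ℕ) < k).map (Fin.succEmb n))
              (by simp [Fin.succ_ne_zero]), Fin.cons j x i := by
          rw [sum_cons, sum_map]; rfl
      _ ≤ _ := sum_le_prefixSum_comp_perm hz <| by
          rw [card_cons, card_map]; exact Nat.add_le_add_right (hP k) 1
  · calc prefixSum x (k + 1)
          = ∑ i ∈ (univ.filter fun i : Fin n => (i : ℕ) < k + 1).map (Fin.succEmb n),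
              Fin.cons j x i := by
          rw [sum_map]; rfl
      _ ≤ _ := sum_le_prefixSum_comp_perm hz (by rw [card_map]; exact hP (k + 1))

lemma prefixSum_succ_fin_cons_comp_perm {n : ℕ} (j k : ℕ) {x : Fin n → ℕ} (hx : Antitone x)
    {σ : Equiv.Perm (Fin (n + 1))} (hz : Antitone (Fin.cons j x ∘ σ)) :
    prefixSum (Fin.cons j x ∘ σ) (k + 1) = max (j + prefixSum x k) (prefixSum x (k + 1)) := by
  obtain ⟨T, hT, hsum⟩ := exists_card_le_prefixSum_comp_perm_eq (Fin.cons j x) σ (k + 1)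
  exact le_antisymm (hsum ▸ sum_fin_cons_le_max j hx hT) (le_prefixSum_succ_fin_cons j k x hz)

theorem stmt8_general (r s j : ℕ) (hj : j ≤ r)
    (A : Set (Fin (s + 1) → ℕ)) (hA : A ⊆ Pset r (s + 1)) (hdc : DownClosed r (s + 1) A) :
    DownClosed (r - j) s
      {y | y ∈ Pset (r - j) s ∧
        ∃ σ : Equiv.Perm (Fin (s + 1)), (Fin.cons j y ∘ σ) ∈ A} := by
  rintro x ⟨hx, σ, hxA⟩ y hy hxy
  refine ⟨hy, ?_⟩
  obtain ⟨τ, hτ⟩ := exists_perm_antitone_comp (Fin.cons j y : Fin (s + 1) → ℕ)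
  have hyP : Fin.cons j y ∘ τ ∈ Pset r (s + 1) := by
    refine ⟨hτ, ?_⟩
    change ∑ i, (Fin.cons j y : Fin (s + 1) → ℕ) (τ i) = r
    rw [Equiv.sum_comp τ, Fin.sum_cons, hy.2]
    omega
  refine ⟨τ, hdc _ hxA _ hyP (dominates_of_prefixSum_succ_le fun k => ?_)⟩
  rw [prefixSum_succ_fin_cons_comp_perm j k hy.1 hτ,
    prefixSum_succ_fin_cons_comp_perm j k hx.1 (hA hxA).1]
  exact max_le_max (Nat.add_le_add_left (hxy k) j) (hxy (k + 1))

/-- Statement for all `s ≥ 3`, written with `s + 1` (so `hs : 2 ≤ s` means `s + 1 ≥ 3`):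
if `A ⊆ 𝒫_{r,s+1}` is down-closed and `0 ≤ j ≤ r`, then
`A∖j = {y ∈ 𝒫_{r-j,s} : the non-increasing rearrangement of y with entry j inserted lies in A}`
is down-closed in `𝒫_{r-j,s}`. -/
theorem stmt8 (r s j : ℕ) (hr : 2 ≤ r) (hs : 2 ≤ s) (hj : j ≤ r)
    (A : Set (Fin (s + 1) → ℕ)) (hA : A ⊆ Pset r (s + 1)) (hdc : DownClosed r (s + 1) A) :
    DownClosed (r - j) s
      {y | y ∈ Pset (r - j) s ∧
        ∃ σ : Equiv.Perm (Fin (s + 1)), (Fin.cons j y ∘ σ) ∈ A} :=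
  stmt8_general r s j hj A hA hdc
end

section
/- For each integer r ≥ 1, let M_r be the maximum, over all multisets μ of non-negative integers of size r summing to r, of the proportion of functions f : [r] → [r] whose multiset of fibre sizes {|f^{-1}(1)|, …, |f^{-1}(r)|} equals μ, i.e., M_r = max_μ |{ f : [r] → [r] : the multiset of fibre sizes of f is μ }| / r^r. Then M_r → 0 as r → ∞. (Equivalently: when r balls are placed uniformly and independently into r urns, the probability of any particular ordered occupancy distribution tends to 0 uniformly as r → ∞.) -/
/-!
If `mⱼ` urns hold exactly `j` balls, the number of functions with fibre-size multiset `μ` is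
`(r!)² / ∏ⱼ (j!)^mⱼ mⱼ!`: one factor `r! / ∏ᵢ μᵢ!` distributes the balls, the other
`r! / ∏ⱼ mⱼ!` assigns the sizes to the urns. Comparing `mⱼ` with the Poisson profile
`cⱼ = r / (e j!)`, Stirling's formula bounds the logarithm of the probability by
`2 + log r - ∑ⱼ cⱼ klFun (mⱼ / cⱼ) - (∑ⱼ log mⱼ) / 2`. If each of `m₀, m₁, m₂` is at least
`r / 12`, the last sum makes the probability `O(r^(-1/2))`; otherwise some `mⱼ` with `j ≤ 2`
is at most half of `cⱼ ≥ r / 6`, and the Kullback–Leibler sum is at least `r / 48`.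
-/

open Finset Real Filter InformationTheory
open scoped Nat

section Words

variable {α β : Type*} [Fintype α] [DecidableEq β]

theorem Multiset.count_map_univ_val (f : α → β) (b : β) :
    (univ.val.map f).count b = #{a | f a = b} := by
  rw [Multiset.count_map]
  simp [Finset.card, Finset.filter, eq_comm]

theorem exists_perm_eq_comp_of_map_univ_val_eq {f g : α → β}
    (h : univ.val.map f = univ.val.map g) : ∃ σ : Equiv.Perm α, f = g ∘ σ := by
  have hcard (b : β) : Fintype.card {a // f a = b} = Fintype.card {a // g a = b} := by
    simpa only [Multiset.count_map_univ_val, Fintype.card_subtype] using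
      congrArg (Multiset.count b) h
  let e (b : β) : {a // f a = b} ≃ {a // g a = b} := Fintype.equivOfCardEq (hcard b)
  refine ⟨(Equiv.sigmaFiberEquiv f).symm.trans
    ((Equiv.sigmaCongrRight e).trans (Equiv.sigmaFiberEquiv g)), funext fun a => ?_⟩
  exact (e (f a) ⟨a, rfl⟩).prop.symm

theorem card_mul_prod_factorial_count_le (w : Multiset β) (T : Finset (α → β))
    (hT : ∀ f ∈ T, univ.val.map f = w) :
    #T * ∏ b ∈ w.toFinset, (w.count b)! ≤ (Fintype.card α)! := by
  classical
  obtain rfl | ⟨g, hg⟩ := T.eq_empty_or_nonempty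
  · simp
  let stab : Finset (Equiv.Perm α) := {τ | g ∘ τ = g}
  have hstab : #stab = ∏ b ∈ w.toFinset, (w.count b)! := by
    have himage : univ.image g = w.toFinset := by
      ext b; simp [← hT g hg]
    rw [← Fintype.card_subtype, DomMulAct.stabilizer_card', himage]
    refine prod_congr rfl fun b _ => ?_
    rw [← hT g hg, Multiset.count_map_univ_val, Fintype.card_subtype]
  choose! σ hσ using fun f hf =>
    exists_perm_eq_comp_of_map_univ_val_eq ((hT f hf).trans (hT g hg).symm)
  have hcomp : ∀ f ∈ T, ∀ τ ∈ stab, g ∘ ⇑(τ * σ f) = f := fun f hf τ hτ => by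
    rw [Equiv.Perm.coe_mul, ← Function.comp_assoc, (mem_filter.1 hτ).2, ← hσ f hf]
  -- orbit–stabilizer: `T × stab` embeds into the permutations
  have hinj : Set.InjOn (fun p : (α → β) × Equiv.Perm α => p.2 * σ p.1) ↑(T ×ˢ stab) := by
    rintro ⟨f₁, τ₁⟩ hp₁ ⟨f₂, τ₂⟩ hp₂ (heq : τ₁ * σ f₁ = τ₂ * σ f₂)
    simp only [coe_product, Set.mem_prod, mem_coe] at hp₁ hp₂
    have hf : f₁ = f₂ := by
      rw [← hcomp f₁ hp₁.1 τ₁ hp₁.2, ← hcomp f₂ hp₂.1 τ₂ hp₂.2, heq]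
    subst hf
    exact congrArg _ (mul_right_cancel heq)
  calc #T * ∏ b ∈ w.toFinset, (w.count b)! = #(T ×ˢ stab) := by rw [card_product, hstab]
    _ ≤ #(univ : Finset (Equiv.Perm α)) := card_le_card_of_injOn _ (fun _ _ => mem_univ _) hinj
    _ = (Fintype.card α)! := by rw [Finset.card_univ, Fintype.card_perm]

end Words

def fibreSizes {α β : Type*} [Fintype α] [Fintype β] [DecidableEq β] (f : α → β) :
    Multiset ℕ :=
  univ.val.map fun b => #{a | f a = b}

theorem card_filter_fibreSizes_eq_mul_le {α β : Type*} [Fintype α] [DecidableEq α] [Fintype β]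
    [DecidableEq β] (μ : Multiset ℕ) :
    #{f : α → β | fibreSizes f = μ} *
        ((μ.map (· !)).prod * ∏ j ∈ μ.toFinset, (μ.count j)!) ≤
      (Fintype.card α)! * (Fintype.card β)! := by
  set F : (α → β) → β → ℕ := fun f b => #{a | f a = b}
  set S := ({f : α → β | fibreSizes f = μ} : Finset _)
  have hfibre : ∀ v ∈ S.image F, #{f ∈ S | F f = v} * (μ.map (· !)).prod ≤ (Fintype.card α)! := by
    intro v hv
    obtain ⟨f₀, hf₀S, rfl⟩ := mem_image.1 hv
    have hcontent : ∀ f ∈ ({f ∈ S | F f = F f₀} : Finset _), univ.val.map f = univ.val.map f₀ := by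
      intro f hf
      ext b
      simpa only [Multiset.count_map_univ_val] using congrFun (mem_filter.1 hf).2 b
    have hprod : ∏ b ∈ (univ.val.map f₀).toFinset, ((univ.val.map f₀).count b)! =
        (μ.map (· !)).prod := by
      rw [prod_subset (subset_univ _) fun b _ hb => by
        rw [Multiset.count_eq_zero_of_notMem (by simpa using hb), Nat.factorial_zero]]
      rw [← (mem_filter.1 hf₀S).2, fibreSizes, Multiset.map_map, prod_eq_multiset_prod]
      simp only [Multiset.count_map_univ_val]
      rfl
    simpa only [hprod] using card_mul_prod_factorial_count_le _ _ hcontent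
  have himage : #(S.image F) * ∏ j ∈ μ.toFinset, (μ.count j)! ≤ (Fintype.card β)! :=
    card_mul_prod_factorial_count_le μ _ fun v hv => by
      obtain ⟨f, hf, rfl⟩ := mem_image.1 hv
      exact (mem_filter.1 hf).2
  calc #S * ((μ.map (· !)).prod * ∏ j ∈ μ.toFinset, (μ.count j)!)
      = (∑ v ∈ S.image F, #{f ∈ S | F f = v} * (μ.map (· !)).prod) *
          ∏ j ∈ μ.toFinset, (μ.count j)! := by
        rw [← sum_mul, ← card_eq_sum_card_image, mul_assoc]
    _ ≤ (∑ _v ∈ S.image F, (Fintype.card α)!) * ∏ j ∈ μ.toFinset, (μ.count j)! := by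
        gcongr with v hv; exact hfibre v hv
    _ = (Fintype.card α)! * (#(S.image F) * ∏ j ∈ μ.toFinset, (μ.count j)!) := by
        rw [sum_const, smul_eq_mul]; ring
    _ ≤ (Fintype.card α)! * (Fintype.card β)! := by gcongr

theorem log_factorial_le_stirling {n : ℕ} (hn : n ≠ 0) :
    log n ! ≤ n * log n - n + log n / 2 + 1 := by
  obtain ⟨k, rfl⟩ := Nat.exists_eq_succ_of_ne_zero hn
  have h := Stirling.log_stirlingSeq'_antitone (Nat.zero_le k)
  simp only [Function.comp, Stirling.stirlingSeq_one] at h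
  have hk : (0 : ℝ) < k.succ := by positivity
  rw [Stirling.log_stirlingSeq_formula, log_div (exp_pos 1).ne' (by positivity), log_exp,
    log_mul two_ne_zero hk.ne', log_div hk.ne' (exp_pos 1).ne', log_exp,
    log_sqrt zero_le_two] at h
  linarith

theorem neg_exp_neg_one_le_mul_log {x : ℝ} (hx : 0 ≤ x) : -exp (-1) ≤ x * log x := by
  obtain rfl | hx := hx.eq_or_lt
  · simp [(exp_pos _).le]
  have h := self_sub_one_le_mul_log (mul_nonneg (exp_pos 1).le hx.le)
  rw [log_mul (exp_pos 1).ne' hx.ne', log_exp] at h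
  calc -exp (-1) = exp (-1) * -1 := by ring
    _ ≤ exp (-1) * (exp 1 * (x * log x)) := by gcongr; linarith
    _ = x * log x := by rw [← mul_assoc, ← exp_add]; simp

theorem one_div_eight_le_klFun {t : ℝ} (ht₀ : 0 ≤ t) (ht : t ≤ 1 / 2) : 1 / 8 ≤ klFun t := by
  have he : exp (-1) < 3 / 8 := by
    rw [exp_neg, inv_lt_comm₀ (exp_pos 1) (by norm_num)]; linarith [exp_one_gt_d9]
  rw [klFun_apply]
  linarith [neg_exp_neg_one_le_mul_log ht₀]

theorem mul_klFun_div_le {c : ℝ} (hc : 0 < c) (m : ℕ) :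
    c * klFun (m / c) ≤ log m ! - log m / 2 - m * log c + c := by
  obtain rfl | hm := eq_or_ne m 0
  · simp [klFun_zero]
  have hm' : (0 : ℝ) < m := by positivity
  have h2π : 0 ≤ log (2 * π) := log_nonneg (by linarith [pi_gt_three])
  have h := Stirling.le_log_factorial_stirling hm
  rw [klFun_apply, log_div hm'.ne' hc.ne']
  field_simp
  linarith

/-- The limiting expected number of urns that receive exactly `j` of `r` balls thrown into `r`
urns: each occupancy is asymptotically Poisson with mean `1`. -/
noncomputable def poissonOccupancy (r : ℝ) (j : ℕ) : ℝ := r / (exp 1 * j !)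

theorem poissonOccupancy_pos {r : ℝ} (hr : 0 < r) (j : ℕ) : 0 < poissonOccupancy r j := by
  unfold poissonOccupancy; positivity

theorem sum_poissonOccupancy_le {r : ℝ} (hr : 0 ≤ r) (s : Finset ℕ) :
    ∑ j ∈ s, poissonOccupancy r j ≤ r := by
  obtain ⟨N, hN⟩ := exists_nat_subset_range s
  calc ∑ j ∈ s, poissonOccupancy r j ≤ ∑ j ∈ range N, poissonOccupancy r j :=
        sum_le_sum_of_subset_of_nonneg hN fun _ _ _ => by unfold poissonOccupancy; positivity
    _ = r / exp 1 * ∑ j ∈ range N, 1 ^ j / (j ! : ℝ) := by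
        rw [mul_sum]; refine sum_congr rfl fun j _ => ?_
        rw [poissonOccupancy, one_pow, div_mul_div_comm, mul_one]
    _ ≤ r / exp 1 * exp 1 := by gcongr; exact sum_le_exp_of_nonneg zero_le_one N
    _ = r := div_mul_cancel₀ r (exp_pos 1).ne'

theorem log_sq_factorial_div_le {r : ℕ} (hr : r ≠ 0) {s : Finset ℕ} {m : ℕ → ℕ}
    (hm : ∑ j ∈ s, m j = r) :
    log ((r ! : ℝ) ^ 2 / ((r : ℝ) ^ r * ∏ j ∈ s, ((j ! : ℝ) ^ m j * (m j)!))) ≤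
      2 + log r - ∑ j ∈ s, poissonOccupancy r j * klFun (m j / poissonOccupancy r j) -
        (∑ j ∈ s, log (m j)) / 2 := by
  have hr' : (0 : ℝ) < r := by positivity
  have hm' : ∑ j ∈ s, (m j : ℝ) = r := by exact_mod_cast hm
  have hlog : log ((r ! : ℝ) ^ 2 / ((r : ℝ) ^ r * ∏ j ∈ s, ((j ! : ℝ) ^ m j * (m j)!))) =
      2 * log r ! - r * log r - ∑ j ∈ s, (m j * log j ! + log (m j)!) := by
    rw [log_div (by positivity) (by positivity), log_mul (by positivity) (by positivity),
      log_prod fun j _ => by positivity]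
    simp only [log_pow, log_mul (pow_pos (Nat.cast_pos.2 (Nat.factorial_pos _)) _).ne'
      (Nat.cast_pos.2 (Nat.factorial_pos _)).ne']
    push_cast; ring
  have hterm (j : ℕ) : poissonOccupancy r j * klFun (m j / poissonOccupancy r j) ≤
      log (m j)! - log (m j) / 2 - m j * (log r - (1 + log j !)) + poissonOccupancy r j := by
    have h := mul_klFun_div_le (poissonOccupancy_pos hr' j) (m j)
    rwa [poissonOccupancy, log_div hr'.ne' (by positivity), log_mul (exp_pos 1).ne' (by positivity),
      log_exp, ← poissonOccupancy] at h
  have hsum := sum_le_sum fun j (_ : j ∈ s) => hterm j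
  simp only [sum_add_distrib, sum_sub_distrib, mul_sub, mul_add, mul_one, ← sum_div, ← sum_mul,
    hm'] at hsum
  rw [hlog, sum_add_distrib]
  linarith [log_factorial_le_stirling hr, sum_poissonOccupancy_le hr'.le s]

theorem min_le_sum_mul_klFun_add_sum_log {r : ℕ} (hr : r ≠ 0) {s : Finset ℕ} (hs : range 3 ⊆ s)
    (m : ℕ → ℕ) :
    min (3 / 2 * log (r / 12)) (r / 48) ≤
      ∑ j ∈ s, poissonOccupancy r j * klFun (m j / poissonOccupancy r j) +
        (∑ j ∈ s, log (m j)) / 2 := by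
  have hr' : (0 : ℝ) < r := by positivity
  have hc := poissonOccupancy_pos hr'
  have hkl (j : ℕ) : 0 ≤ poissonOccupancy r j * klFun (m j / poissonOccupancy r j) :=
    mul_nonneg (hc j).le (klFun_nonneg (by have := hc j; positivity))
  have hlog (j : ℕ) : 0 ≤ log (m j) := log_natCast_nonneg (m j)
  by_cases hcrowded : ∀ j ∈ range 3, (r : ℝ) / 12 ≤ m j
  · refine min_le_of_left_le ?_
    have h3 : 3 * log (r / 12) ≤ ∑ j ∈ range 3, log (m j) :=
      calc 3 * log (r / 12) = ∑ _j ∈ range 3, log (r / 12) := by simp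
        _ ≤ ∑ j ∈ range 3, log (m j) :=
          sum_le_sum fun j hj => log_le_log (by positivity) (hcrowded j hj)
    linarith [sum_le_sum_of_subset_of_nonneg hs fun j _ _ => hlog j,
      sum_nonneg fun j (_ : j ∈ s) => hkl j]
  · refine min_le_of_right_le ?_
    push Not at hcrowded
    obtain ⟨j, hj, hmj⟩ := hcrowded
    have hcj : (r : ℝ) / 6 ≤ poissonOccupancy r j := by
      have hj! : (j ! : ℝ) ≤ 2 := by
        exact_mod_cast Nat.factorial_le (Nat.lt_succ_iff.1 (mem_range.1 hj))
      rw [poissonOccupancy]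
      gcongr
      nlinarith [exp_one_lt_d9, exp_pos 1]
    have hklj : 1 / 8 ≤ klFun (m j / poissonOccupancy r j) :=
      one_div_eight_le_klFun (by have := hc j; positivity)
        (by rw [div_le_iff₀ (hc j)]; linarith)
    have hterm : (r : ℝ) / 48 ≤ poissonOccupancy r j * klFun (m j / poissonOccupancy r j) := by
      nlinarith
    linarith [single_le_sum (fun j _ => hkl j) (hs hj), sum_nonneg fun j (_ : j ∈ s) => hlog j]

theorem tendsto_two_add_log_sub_min_atBot :
    Tendsto (fun r : ℝ => 2 + log r - min (3 / 2 * log (r / 12)) (r / 48)) atTop atBot := by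
  have hA : Tendsto (fun r : ℝ => 3 / 2 * log (r / 12) - log r) atTop atTop := by
    refine tendsto_atTop_add_const_right _ (-(3 / 2 * log 12))
      (tendsto_log_atTop.atTop_div_const two_pos) |>.congr' ?_
    filter_upwards [eventually_gt_atTop 0] with r hr
    rw [log_div hr.ne' (by norm_num)]
    ring
  have hB : Tendsto (fun r : ℝ => r / 48 - log r) atTop atTop := by
    refine tendsto_atTop_mono' _ ?_ (tendsto_atTop_add_const_right _ (1 - log 96)
      (tendsto_id.atTop_div_const (by norm_num : (0 : ℝ) < 96)))
    filter_upwards [eventually_gt_atTop 0] with r hr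
    have h := log_le_sub_one_of_pos (by positivity : 0 < r / 96)
    rw [log_div hr.ne' (by norm_num)] at h
    simp only [id]
    linarith
  refine tendsto_atBot_add_const_left _ 2 (tendsto_neg_atTop_atBot.comp
    (tendsto_inf_atTop _ hA hB)) |>.congr fun r => ?_
  simp only [Function.comp, min_sub_sub_right]
  ring

theorem card_fibreSizes_eq_div_pow_le {r : ℕ} (hr : r ≠ 0) (μ : Multiset ℕ)
    (hμ : Multiset.card μ = r) :
    (#{f : Fin r → Fin r | fibreSizes f = μ} : ℝ) / (r : ℝ) ^ r ≤
      exp (2 + log r - min (3 / 2 * log (r / 12)) (r / 48)) := by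
  set s := μ.toFinset ∪ range 3
  have hcount := card_filter_fibreSizes_eq_mul_le (α := Fin r) (β := Fin r) μ
  have hD : (μ.map (· !)).prod * ∏ j ∈ μ.toFinset, (μ.count j)! =
      ∏ j ∈ s, (j ! ^ μ.count j * (μ.count j)!) := by
    rw [prod_multiset_map_count, ← prod_mul_distrib]
    exact prod_subset subset_union_left fun j _ hj => by
      simp [Multiset.count_eq_zero_of_notMem (by simpa using hj)]
  have hsum : ∑ j ∈ s, μ.count j = r := by
    rw [← sum_subset subset_union_left fun j _ hj => Multiset.count_eq_zero_of_notMem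
      (by simpa using hj), Multiset.toFinset_sum_count_eq, hμ]
  rw [hD, Fintype.card_fin, ← sq] at hcount
  have hDpos : (0 : ℝ) < ∏ j ∈ s, ((j ! : ℝ) ^ μ.count j * (μ.count j)!) := by positivity
  have hrpos : (0 : ℝ) < (r : ℝ) ^ r := by positivity
  calc _ ≤ (r ! : ℝ) ^ 2 / ((r : ℝ) ^ r * ∏ j ∈ s, ((j ! : ℝ) ^ μ.count j * (μ.count j)!)) := by
        rw [mul_comm, ← div_div, div_le_div_iff_of_pos_right hrpos, le_div_iff₀ hDpos]
        exact_mod_cast hcount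
    _ = exp (log ((r ! : ℝ) ^ 2 /
          ((r : ℝ) ^ r * ∏ j ∈ s, ((j ! : ℝ) ^ μ.count j * (μ.count j)!)))) :=
        (exp_log (by positivity)).symm
    _ ≤ _ := exp_le_exp.2 <| by
        linarith [log_sq_factorial_div_le hr hsum,
          min_le_sum_mul_klFun_add_sum_log hr (s := s) subset_union_right μ.count]

/-- When `r` balls are placed uniformly and independently into `r` urns, the maximal
probability `M_r` of any particular occupancy multiset tends to `0` as `r → ∞`:
for every `ε > 0` there is `N` such that for all `r ≥ N` and every multiset `μ` of
non-negative integers of size `r` summing to `r`, the proportion of functions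
`f : [r] → [r]` whose multiset of fibre sizes equals `μ` is less than `ε`. -/
theorem stmt10 :
    ∀ ε : ℝ, 0 < ε → ∃ N : ℕ, ∀ r : ℕ, N ≤ r → ∀ μ : Multiset ℕ,
      Multiset.card μ = r → μ.sum = r →
      ((Finset.univ.filter (fun f : Fin r → Fin r =>
          Finset.univ.val.map
            (fun i : Fin r => (Finset.univ.filter (fun a : Fin r => f a = i)).card) = μ)).card : ℝ) /
        (r : ℝ) ^ r < ε := by
  intro ε hε
  obtain ⟨N, hN⟩ := eventually_atTop.1 <| (tendsto_exp_atBot.comp <|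
    tendsto_two_add_log_sub_min_atBot.comp tendsto_natCast_atTop_atTop).eventually
      (gt_mem_nhds hε)
  exact ⟨N + 1, fun r hr μ hμ _ =>
    (card_fibreSizes_eq_div_pow_le (by omega) μ hμ).trans_lt (hN r (by omega))⟩
end

section
/- Let r ≥ 2 and m ≥ 1 be integers and P an r-pattern on [m]. There is a constant C (depending on r, m and P only) such that for every n ≥ 1 and every partition [n] = V_1 ∪ ⋯ ∪ V_m into disjoint parts, the number of edges of the blow-up satisfies | |P((V_1,…,V_m))| − λ_P(|V_1|/n, …, |V_m|/n) · binom(n,r) | ≤ C · n^{r−1}. -/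
/-!
Splitting an `r`-set `X` by its profile `D` gives `|P((V_i))| = Σ_{D∈P} Π_i C(v_i, D_i)` with
`v_i = |V_i|`, while `λ_P(v/n)·C(n,r) = Σ_{D∈P} (n^{(r)}/n^r) Π_i v_i^{D_i}/D_i!`, where `k^{(d)}`
is the falling factorial. Since `Π_i C(v_i, D_i) = Π_i v_i^{(D_i)}/D_i!`, each pattern contributes
an error governed by `v^d - v^{(d)} ≤ d² n^{d-1}` for `v ≤ n`, which telescopes over the product to
`r² n^{r-1}` and also bounds `(1 - n^{(r)}/n^r) n^r`.
-/

/-- The Lagrange polynomial `λ_P(x) = r! · Σ_{D∈P} Π_i x_i^{D(i)}/D(i)!` of an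
`r`-pattern `P` on `[m]`, where an `r`-multiset on `[m]` is encoded by its multiplicity
function `D : Fin m → ℕ` (with `Σ_i D(i) = r`). -/
noncomputable def lagrangePolyP (r m : ℕ) (P : Finset (Fin m → ℕ)) (x : Fin m → ℝ) : ℝ :=
  (r.factorial : ℝ) * ∑ D ∈ P, ∏ i, (x i) ^ (D i) / ((D i).factorial : ℝ)

open Finset Function

section Profile

variable {ι α : Type*} [Fintype ι] [DecidableEq α] {V : ι → Finset α}

theorem biUnion_inter_eq_of_subset (hV : Pairwise (Disjoint on V)) {g : ι → Finset α}
    (hg : ∀ i, g i ⊆ V i) (i : ι) : univ.biUnion g ∩ V i = g i := by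
  ext x
  simp only [mem_inter, mem_biUnion, mem_univ, true_and]
  refine ⟨fun ⟨⟨j, hj⟩, hxi⟩ => ?_, fun hx => ⟨⟨i, hx⟩, hg i hx⟩⟩
  obtain rfl | hji := eq_or_ne j i
  · exact hj
  · exact absurd hxi (disjoint_left.mp (hV hji) (hg j hj))

/-- `X ↦ (X ∩ V i)ᵢ` identifies the `r`-subsets of `⋃ V i` of profile `D` with the
families of `D i`-subsets of the parts. -/
theorem card_filter_profile_eq [DecidableEq ι] (hV : Pairwise (Disjoint on V)) {r : ℕ} {D : ι → ℕ}
    (hD : ∑ i, D i = r) :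
    #{X ∈ powersetCard r (univ.biUnion V) | (fun i => #(X ∩ V i)) = D} =
      ∏ i, (#(V i)).choose (D i) := by
  trans #(Fintype.piFinset fun i => powersetCard (D i) (V i))
  swap
  · simp
  refine card_nbij' (fun X i => X ∩ V i) (fun g => univ.biUnion g) ?_ ?_ ?_ ?_
  · intro X hX
    simp only [mem_coe, mem_filter, mem_powersetCard] at hX
    simp only [mem_coe, Fintype.mem_piFinset, mem_powersetCard]
    exact fun i => ⟨inter_subset_right, congrFun hX.2 i⟩
  · intro g hg
    simp only [mem_coe, Fintype.mem_piFinset, mem_powersetCard] at hg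
    simp only [mem_coe, mem_filter, mem_powersetCard]
    refine ⟨⟨biUnion_mono fun i _ => (hg i).1, ?_⟩, ?_⟩
    · rw [card_biUnion fun i _ j _ hij => (hV hij).mono (hg i).1 (hg j).1]
      simp only [(hg _).2, hD]
    · funext i
      rw [biUnion_inter_eq_of_subset hV (fun i => (hg i).1), (hg i).2]
  · intro X hX
    simp only [mem_coe, mem_filter, mem_powersetCard] at hX
    simp only [← inter_biUnion, inter_eq_left.mpr hX.1.1]
  · intro g hg
    simp only [mem_coe, Fintype.mem_piFinset, mem_powersetCard] at hg
    exact funext (biUnion_inter_eq_of_subset hV fun i => (hg i).1)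

theorem card_filter_profile_mem [DecidableEq ι] (hV : Pairwise (Disjoint on V)) {r : ℕ}
    {P : Finset (ι → ℕ)} (hP : ∀ D ∈ P, ∑ i, D i = r) :
    #{X ∈ powersetCard r (univ.biUnion V) | (fun i => #(X ∩ V i)) ∈ P} =
      ∑ D ∈ P, ∏ i, (#(V i)).choose (D i) := by
  refine (card_eq_sum_card_fiberwise fun X hX => (mem_filter.mp hX).2).trans
    (sum_congr rfl fun D hD => ?_)
  rw [← card_filter_profile_eq hV (hP D hD), filter_filter]
  exact congrArg card (filter_congr fun X _ => ⟨fun h => h.2, fun h => ⟨h ▸ hD, h⟩⟩)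

end Profile

theorem Nat.pow_le_descFactorial_add {v n : ℕ} (h : v ≤ n) :
    ∀ d, v ^ d ≤ v.descFactorial d + d ^ 2 * n ^ (d - 1)
  | 0 => by simp
  | 1 => by simp
  | d + 2 => by
    have ih := Nat.pow_le_descFactorial_add h (d + 1)
    simp only [Nat.add_sub_cancel] at ih ⊢
    have hdesc : v.descFactorial (d + 1) ≤ n ^ (d + 1) :=
      (descFactorial_le_pow v _).trans (Nat.pow_le_pow_left h _)
    have hshift :
        v * v.descFactorial (d + 1) ≤ v.descFactorial (d + 2) + (d + 1) * n ^ (d + 1) := by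
      rw [descFactorial_succ v (d + 1)]
      calc v * v.descFactorial (d + 1) ≤ (v - (d + 1) + (d + 1)) * v.descFactorial (d + 1) :=
            Nat.mul_le_mul_right _ (by omega)
        _ = (v - (d + 1)) * v.descFactorial (d + 1) + (d + 1) * v.descFactorial (d + 1) := by ring
        _ ≤ _ := Nat.add_le_add_left (Nat.mul_le_mul_left _ hdesc) _
    have hvn : v * n ^ d ≤ n ^ (d + 1) := by
      rw [pow_succ']; exact Nat.mul_le_mul_right _ h
    calc v ^ (d + 2) = v * v ^ (d + 1) := by ring
      _ ≤ v * (v.descFactorial (d + 1) + (d + 1) ^ 2 * n ^ d) := Nat.mul_le_mul_left v ih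
      _ = v * v.descFactorial (d + 1) + (d + 1) ^ 2 * (v * n ^ d) := by ring
      _ ≤ v.descFactorial (d + 2) + (d + 1) * n ^ (d + 1) + (d + 1) ^ 2 * n ^ (d + 1) :=
        add_le_add hshift (Nat.mul_le_mul_left _ hvn)
      _ ≤ v.descFactorial (d + 2) + (d + 2) ^ 2 * n ^ (d + 1) := by
        rw [add_assoc, ← add_mul]; gcongr; nlinarith

theorem prod_sub_prod_le_sum_mul_prod_erase {ι R : Type*} [CommRing R] [LinearOrder R]
    [IsStrictOrderedRing R] [DecidableEq ι] (s : Finset ι) {a b M : ι → R}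
    (ha : ∀ i ∈ s, 0 ≤ a i) (hab : ∀ i ∈ s, a i ≤ b i) (hbM : ∀ i ∈ s, b i ≤ M i) :
    ∏ i ∈ s, b i - ∏ i ∈ s, a i ≤ ∑ i ∈ s, (b i - a i) * ∏ j ∈ s.erase i, M j := by
  induction s using Finset.induction_on with
  | empty => simp
  | @insert x s hx ih =>
    simp only [mem_insert, forall_eq_or_imp] at ha hab hbM
    have hprod_erase : ∀ i ∈ s, ∏ j ∈ (insert x s).erase i, M j = M x * ∏ j ∈ s.erase i, M j :=
      fun i hi => by
        rw [erase_insert_of_ne (ne_of_mem_of_not_mem hi hx).symm,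
          prod_insert fun h => hx (mem_of_mem_erase h)]
    rw [prod_insert hx, prod_insert hx, sum_insert hx, erase_insert hx,
      sum_congr rfl fun i hi => by rw [hprod_erase i hi, mul_left_comm], ← mul_sum]
    have hA : 0 ≤ ∏ i ∈ s, a i := prod_nonneg ha.2
    have hAB : ∏ i ∈ s, a i ≤ ∏ i ∈ s, b i := prod_le_prod ha.2 hab.2
    have hBM : ∏ i ∈ s, b i ≤ ∏ i ∈ s, M i :=
      prod_le_prod (fun i hi => (ha.2 i hi).trans (hab.2 i hi)) hbM.2
    have IH := ih ha.2 hab.2 hbM.2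
    nlinarith [mul_le_mul_of_nonneg_left hBM (sub_nonneg.mpr hab.1),
      mul_le_mul IH (hab.1.trans hbM.1) ha.1 (by linarith)]

section Pattern

variable {ι : Type*} [Fintype ι] {n r : ℕ} {v D : ι → ℕ}

theorem prod_pow_sub_prod_descFactorial_le (hv : ∀ i, v i ≤ n) (hD : ∑ i, D i = r) :
    ∏ i, ((v i : ℝ) ^ D i) - ∏ i, ((v i).descFactorial (D i) : ℝ) ≤ r ^ 2 * n ^ (r - 1) := by
  classical
  have hDr : ∀ i, D i ≤ r := fun i => hD ▸ single_le_sum (fun j _ => Nat.zero_le (D j)) (mem_univ i)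
  have hdesc_le_pow : ∀ i, ((v i).descFactorial (D i) : ℝ) ≤ (v i : ℝ) ^ D i := fun i => by
    exact_mod_cast Nat.descFactorial_le_pow _ _
  have hpow_sub_desc : ∀ i, (v i : ℝ) ^ D i - (v i).descFactorial (D i) ≤ D i ^ 2 * n ^ (D i - 1) :=
    fun i => by
      have := Nat.pow_le_descFactorial_add (hv i) (D i)
      rw [sub_le_iff_le_add']; exact_mod_cast this
  have hprod_erase : ∀ i, ∏ j ∈ univ.erase i, (n : ℝ) ^ D j = n ^ (r - D i) := fun i => by
    rw [prod_pow_eq_pow_sum, ← hD, ← add_sum_erase _ _ (mem_univ i), Nat.add_sub_cancel_left]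
  have hterm : ∀ i,
      ((v i : ℝ) ^ D i - (v i).descFactorial (D i)) * ∏ j ∈ univ.erase i, (n : ℝ) ^ D j ≤
        (D i : ℝ) ^ 2 * n ^ (r - 1) := fun i => by
    rw [hprod_erase]
    obtain hDi | hDi := Nat.eq_zero_or_pos (D i)
    · simp [hDi]
    calc _ ≤ (D i : ℝ) ^ 2 * n ^ (D i - 1) * n ^ (r - D i) := by gcongr; exact hpow_sub_desc i
      _ = (D i : ℝ) ^ 2 * n ^ (r - 1) := by
        rw [mul_assoc, ← pow_add]; congr 2; have := hDr i; omega
  calc _ ≤ ∑ i, ((v i : ℝ) ^ D i - (v i).descFactorial (D i)) * ∏ j ∈ univ.erase i, (n : ℝ) ^ D j :=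
        prod_sub_prod_le_sum_mul_prod_erase _ (fun i _ => by positivity) (fun i _ => hdesc_le_pow i)
          (fun i _ => by gcongr; exact_mod_cast hv i)
    _ ≤ ∑ i, (D i : ℝ) ^ 2 * n ^ (r - 1) := sum_le_sum fun i _ => hterm i
    _ ≤ r ^ 2 * n ^ (r - 1) := by
      rw [← sum_mul]
      gcongr
      exact_mod_cast hD ▸ sum_sq_le_sq_sum_of_nonneg fun i _ => Nat.zero_le (D i)

theorem abs_prod_choose_sub_le (hn : 0 < n) (hv : ∀ i, v i ≤ n) (hD : ∑ i, D i = r) :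
    |∏ i, ((v i).choose (D i) : ℝ) -
        n.descFactorial r / n ^ r * ∏ i, (v i : ℝ) ^ D i / (D i).factorial| ≤
      2 * r ^ 2 * n ^ (r - 1) := by
  set x := ∏ i, ((v i).descFactorial (D i) : ℝ)
  set y := ∏ i, (v i : ℝ) ^ D i
  set t : ℝ := n.descFactorial r / n ^ r
  have hF : 1 ≤ ∏ i, ((D i).factorial : ℝ) := by
    exact_mod_cast (prod_pos fun i _ => (D i).factorial_pos : 0 < ∏ i, (D i).factorial)
  have hchoose : ∏ i, ((v i).choose (D i) : ℝ) = x / ∏ i, ((D i).factorial : ℝ) := by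
    rw [← prod_div_distrib]
    refine prod_congr rfl fun i _ => ?_
    rw [eq_div_iff (by positivity), Nat.descFactorial_eq_factorial_mul_choose]
    push_cast; ring
  have hx : 0 ≤ x := by positivity
  have hxy : x ≤ y := prod_le_prod (fun i _ => by positivity)
    fun i _ => by exact_mod_cast Nat.descFactorial_le_pow _ _
  have hy : y ≤ n ^ r := by
    rw [← hD, ← prod_pow_eq_pow_sum]
    exact prod_le_prod (fun i _ => by positivity) fun i _ => by gcongr; exact_mod_cast hv i
  have ht : 0 ≤ t ∧ t ≤ 1 := by
    refine ⟨by positivity, div_le_one_of_le₀ ?_ (by positivity)⟩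
    exact_mod_cast Nat.descFactorial_le_pow n r
  have hone_sub_t : (1 - t) * n ^ r ≤ r ^ 2 * n ^ (r - 1) := by
    have := Nat.pow_le_descFactorial_add le_rfl (n := n) r
    have hnr : (n : ℝ) ^ r ≠ 0 := by positivity
    rw [sub_mul, one_mul, div_mul_cancel₀ _ hnr, sub_le_iff_le_add']
    exact_mod_cast this
  have hyx := prod_pow_sub_prod_descFactorial_le hv hD
  rw [hchoose, prod_div_distrib, ← mul_div_assoc, ← sub_div, abs_div,
    abs_of_pos (zero_lt_one.trans_le hF)]
  -- `x - t y = (x - y) + (1 - t) y` with `0 ≤ y - x ≤ r² n^{r-1}` and `(1 - t) y ≤ (1 - t) n^r`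
  refine (div_le_self (abs_nonneg _) hF).trans (abs_le.mpr ⟨?_, ?_⟩)
  · nlinarith
  · nlinarith

end Pattern

theorem lagrangePolyP_div_mul_choose {r m n : ℕ} {P : Finset (Fin m → ℕ)}
    (hP : ∀ D ∈ P, ∑ i, D i = r) (v : Fin m → ℝ) :
    lagrangePolyP r m P (fun i => v i / n) * n.choose r =
      ∑ D ∈ P, n.descFactorial r / n ^ r * ∏ i, v i ^ D i / (D i).factorial := by
  rw [lagrangePolyP, mul_sum, sum_mul]
  refine sum_congr rfl fun D hD => ?_
  have hscale : ∏ i, (v i / n) ^ D i / (D i).factorial =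
      (∏ i, v i ^ D i / (D i).factorial) / n ^ r := by
    rw [← hP D hD, ← prod_pow_eq_pow_sum, ← prod_div_distrib]
    exact prod_congr rfl fun i _ => by rw [div_pow]; ring
  rw [hscale, Nat.descFactorial_eq_factorial_mul_choose]
  push_cast; ring

theorem stmt11_general (r m : ℕ)
    (P : Finset (Fin m → ℕ)) (hP : ∀ D ∈ P, ∑ i, D i = r) :
    ∃ C : ℝ, ∀ n : ℕ, 1 ≤ n → ∀ V : Fin m → Finset (Fin n),
      (∀ i j, i ≠ j → Disjoint (V i) (V j)) →
      Finset.univ.biUnion V = Finset.univ →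
      |(((Finset.powersetCard r (Finset.univ : Finset (Fin n))).filter
            (fun X : Finset (Fin n) => (fun i => (X ∩ V i).card) ∈ P)).card : ℝ) -
          lagrangePolyP r m P (fun i => ((V i).card : ℝ) / (n : ℝ)) * (n.choose r : ℝ)| ≤
        C * (n : ℝ) ^ (r - 1) := by
  refine ⟨#P * (2 * r ^ 2), fun n hn V hV hcover => ?_⟩
  have hcount := card_filter_profile_mem hV hP
  rw [hcover] at hcount
  rw [hcount, lagrangePolyP_div_mul_choose hP, Nat.cast_sum, ← sum_sub_distrib]
  calc _ ≤ ∑ D ∈ P, |((∏ i, (#(V i)).choose (D i) : ℕ) : ℝ) -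
          n.descFactorial r / n ^ r * ∏ i, (#(V i) : ℝ) ^ D i / (D i).factorial| :=
        abs_sum_le_sum_abs _ _
    _ ≤ ∑ _D ∈ P, 2 * (r : ℝ) ^ 2 * n ^ (r - 1) := sum_le_sum fun D hD => by
        push_cast
        exact abs_prod_choose_sub_le hn (fun i => (card_le_univ _).trans_eq (Fintype.card_fin n))
          (hP D hD)
    _ = _ := by rw [sum_const, nsmul_eq_mul]; ring

/-- For each partition `[n] = V_1 ∪ ⋯ ∪ V_m`, the number of edges of the blow-up
`P((V_1,…,V_m))` (the `r`-subsets `X ⊆ [n]` whose profile `i ↦ |X ∩ V_i|` lies in `P`)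
differs from `λ_P(|V_1|/n,…,|V_m|/n)·C(n,r)` by at most `C·n^{r−1}`, where the constant
`C` depends only on `r`, `m` and `P`. -/
theorem stmt11 (r m : ℕ) (hr : 2 ≤ r) (hm : 1 ≤ m)
    (P : Finset (Fin m → ℕ)) (hP : ∀ D ∈ P, ∑ i, D i = r) :
    ∃ C : ℝ, ∀ n : ℕ, 1 ≤ n → ∀ V : Fin m → Finset (Fin n),
      (∀ i j, i ≠ j → Disjoint (V i) (V j)) →
      Finset.univ.biUnion V = Finset.univ →
      |(((Finset.powersetCard r (Finset.univ : Finset (Fin n))).filter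
            (fun X : Finset (Fin n) => (fun i => (X ∩ V i).card) ∈ P)).card : ℝ) -
          lagrangePolyP r m P (fun i => ((V i).card : ℝ) / (n : ℝ)) * (n.choose r : ℝ)| ≤
        C * (n : ℝ) ^ (r - 1) :=
  stmt11_general r m P hP
end
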